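/- arXiv:1411.0613 — 4 statements merged into one kernel-verified Lean document; each statement's English description precedes it below -/
import Mathlib

section
/- Let k be a field. Every pointwise finite-dimensional persistence module indexed by (ℤ, ≤) is isomorphic to a direct sum of interval modules. Precisely: if V is a functor from ℤ (viewed as a category via its usual order) to k-vector spaces such that V(n) is finite-dimensional for every n ∈ ℤ, then there exist an index set J, a family of nonempty order-convex subsets (intervals) I_j ⊆ ℤ for j ∈ J, and an isomorphism of functors V ≅ ⨁_{j ∈ J} k_{I_j}, where the direct sum of functors is taken pointwise. -/
/-!
Crawley-Boevey's functorial filtration. At time `t`, the images `im (ρ a t)` (`a ∈ ℤ ∪ {-∞}`)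
and the kernels `ker (ρ t (b + 1))` (`b ∈ ℤ ∪ {+∞}`) form two chains in `V t`. For an interval
`[a, b]`, the cell `im_a ∩ ker_b` contains `low`, the part born strictly before `a` or dying
strictly before `b`. Complements of `low` in the cells give a direct sum decomposition of `V t`:
independence by looking at a lexicographically maximal cell, spanning by a descending induction
that terminates because both chains stabilise in finite dimension. For `s ≤ t` in `[a, b]`, the
map `ρ s t` induces an isomorphism between the quotients `cell / low` at `s` and at `t`, so a basis
of a complement at one time can be pushed forward and lifted backward to compatible bases on the
whole interval; past `b` these vectors are killed. Together these bases exhibit `V` as a direct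
sum of interval modules.
-/

open scoped Classical

/-- The structure map of a pointwise direct sum of interval modules over `ℤ`:
on the summand indexed by `j` with `s ∈ I j`, it is the identity onto the summand
indexed by `j` if `t ∈ I j`, and zero otherwise. -/
noncomputable def intervalSumMap (k : Type) [Field k] {J : Type} (I : J → Set ℤ)
    (s t : ℤ) :
    ({j : J // s ∈ I j} →₀ k) →ₗ[k] ({j : J // t ∈ I j} →₀ k) :=
  Finsupp.lsum k fun j =>
    if h : t ∈ I j.1 then Finsupp.lsingle (⟨j.1, h⟩ : {j : J // t ∈ I j}) else 0

open Set Submodule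

theorem Monotone.exists_forall_le_eq {α L : Type*} [Preorder α] [Nonempty α] [PartialOrder L]
    [WellFoundedLT L] {f : α → L} (hf : Monotone f) : ∃ a₀, ∀ a ≤ a₀, f a = f a₀ := by
  obtain ⟨_, ⟨a₀, rfl⟩, hmin⟩ := wellFounded_lt.has_min (range f) (range_nonempty f)
  exact ⟨a₀, fun a ha => (hf ha).eq_of_not_lt (hmin _ ⟨a, rfl⟩)⟩

theorem Monotone.exists_forall_ge_eq {α L : Type*} [Preorder α] [Nonempty α] [PartialOrder L]
    [WellFoundedGT L] {f : α → L} (hf : Monotone f) : ∃ b₀, ∀ b ≥ b₀, f b = f b₀ := by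
  obtain ⟨_, ⟨b₀, rfl⟩, hmax⟩ := wellFounded_gt.has_min (range f) (range_nonempty f)
  exact ⟨b₀, fun b hb => ((hf hb).eq_of_not_lt (hmax _ ⟨b, rfl⟩)).symm⟩

theorem iSupIndep_of_disjoint_iSup_lt {R M ι : Type*} [Ring R] [AddCommGroup M] [Module R M]
    [LinearOrder ι] {p : ι → Submodule R M} (h : ∀ i, Disjoint (p i) (⨆ j < i, p j)) :
    iSupIndep p := by
  classical
  rw [iSupIndep_iff_finsetSum_eq_zero_imp_eq_zero]
  intro s
  induction s using Finset.induction_on_max with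
  | empty => simp
  | insert i s hlt ih =>
    intro v hv hsum
    have hi : i ∉ s := fun hi => lt_irrefl i (hlt i hi)
    rw [Finset.sum_insert hi] at hsum
    have hvi : v i = 0 := by
      refine disjoint_def.1 (h i) _ (hv i (s.mem_insert_self i)) ?_
      rw [add_eq_zero_iff_eq_neg.1 hsum, neg_mem_iff]
      exact biSup_mono (f := p) (fun j hj => hlt j hj)
        (sum_mem_biSup fun j hj => hv j (Finset.mem_insert_of_mem hj))
    rw [hvi, zero_add] at hsum
    intro j hj
    rcases Finset.mem_insert.1 hj with rfl | hj
    · exact hvi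
    · exact ih v (fun j hj => hv j (Finset.mem_insert_of_mem hj)) hsum j hj

namespace TwoFiltration

variable {α β L : Type*} [CompleteLattice L]

def supBelow [Preorder α] (F : α → L) (a : α) : L := ⨆ a' < a, F a'

def cell (F : α → L) (G : β → L) (a : α) (b : β) : L := F a ⊓ G b

def low [Preorder α] [Preorder β] (F : α → L) (G : β → L) (a : α) (b : β) : L :=
  supBelow F a ⊓ G b ⊔ F a ⊓ supBelow G b

section Preorder

variable [Preorder α] {F : α → L}

theorem le_supBelow {a' a : α} (h : a' < a) : F a' ≤ supBelow F a :=
  le_iSup₂ (f := fun a' (_ : a' < a) => F a') a' h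

theorem supBelow_le (hF : Monotone F) {a c : α} (h : ∀ a' < a, a' ≤ c) : supBelow F a ≤ F c :=
  iSup₂_le fun a' ha' => hF (h a' ha')

theorem supBelow_le_self (hF : Monotone F) (a : α) : supBelow F a ≤ F a :=
  supBelow_le hF fun _ => le_of_lt

@[simp] theorem supBelow_bot [OrderBot α] : supBelow F ⊥ = ⊥ := by
  simp [supBelow]

end Preorder

theorem supBelow_top_withTop [Preorder α] {G : WithTop α → L} : supBelow G ⊤ = ⨆ b : α, G b :=
  le_antisymm
    (iSup₂_le fun b hb => by lift b to α using hb.ne; exact le_iSup (fun b : α => G b) b)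
    (iSup_le fun b => le_supBelow (WithTop.coe_lt_top b))

theorem supBelow_coe_withTop {G : WithTop ℤ → L} (hG : Monotone G) (b : ℤ) :
    supBelow G b = G ↑(b - 1) :=
  le_antisymm
    (supBelow_le hG fun b' hb' => by
      induction b' with
      | top => exact absurd hb' (not_lt.2 le_top)
      | coe b' => exact WithTop.coe_le_coe.2 (by have := WithTop.coe_lt_coe.1 hb'; omega))
    (le_supBelow (WithTop.coe_lt_coe.2 (by omega)))

theorem supBelow_coe_withBot_le {F : WithBot ℤ → L} (hF : Monotone F) (a : ℤ) :
    supBelow F ↑(a + 1) ≤ F a :=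
  supBelow_le hF fun a' ha' => by
    induction a' with
    | bot => exact bot_le
    | coe a' => exact WithBot.coe_le_coe.2 (by have := WithBot.coe_lt_coe.1 ha'; omega)

section Monotone

variable [Preorder α] [Preorder β] {F : α → L} {G : β → L} (hF : Monotone F) (hG : Monotone G)
include hF hG

theorem low_le_cell (a : α) (b : β) : low F G a b ≤ cell F G a b :=
  sup_le (inf_le_inf_right _ (supBelow_le_self hF a)) (inf_le_inf_left _ (supBelow_le_self hG b))

theorem cell_inf_sup_eq_low [IsModularLattice L] (a : α) (b : β) :
    cell F G a b ⊓ (supBelow F a ⊔ supBelow G b) = low F G a b := by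
  calc cell F G a b ⊓ (supBelow F a ⊔ supBelow G b)
      = (supBelow F a ⊔ supBelow G b) ⊓ F a ⊓ G b := by
        rw [cell, inf_comm, inf_assoc]
    _ = (supBelow G b ⊓ F a ⊔ supBelow F a) ⊓ G b := by
        rw [sup_inf_assoc_of_le _ (supBelow_le_self hF a), sup_comm]
    _ = supBelow G b ⊓ F a ⊔ supBelow F a ⊓ G b :=
        sup_inf_assoc_of_le _ (inf_le_left.trans (supBelow_le_self hG b))
    _ = low F G a b := by rw [low, sup_comm, inf_comm (supBelow G b)]

end Monotone

/-- Order the cells lexicographically: the cells below `(a, b)` lie in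
`supBelow F a ⊔ supBelow G b`, which meets the cell `(a, b)` in `low F G a b`. -/
theorem iSupIndep_of_disjoint_low {R M : Type*} [Ring R] [AddCommGroup M] [Module R M]
    [LinearOrder α] [LinearOrder β] {F : α → Submodule R M} {G : β → Submodule R M}
    (hF : Monotone F) (hG : Monotone G) {C : α × β → Submodule R M}
    (hC : ∀ p, C p ≤ cell F G p.1 p.2) (hCL : ∀ p, Disjoint (C p) (low F G p.1 p.2)) :
    iSupIndep C := by
  have hlex : iSupIndep fun q : α ×ₗ β => C (ofLex q) := by
    refine iSupIndep_of_disjoint_iSup_lt fun q => ?_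
    have hsup : ⨆ q' < q, C (ofLex q') ≤ supBelow F (ofLex q).1 ⊔ supBelow G (ofLex q).2 := by
      refine iSup₂_le fun q' hq' => ?_
      rcases Prod.Lex.lt_iff.1 hq' with h | ⟨h, h'⟩
      · exact (hC _).trans (inf_le_left.trans ((le_supBelow h).trans le_sup_left))
      · exact (hC _).trans (inf_le_right.trans ((le_supBelow h').trans le_sup_right))
    rw [disjoint_iff, eq_bot_iff]
    calc C (ofLex q) ⊓ ⨆ q' < q, C (ofLex q')
        ≤ C (ofLex q) ⊓ (cell F G (ofLex q).1 (ofLex q).2 ⊓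
            (supBelow F (ofLex q).1 ⊔ supBelow G (ofLex q).2)) :=
          le_inf inf_le_left (le_inf (inf_le_left.trans (hC _)) (inf_le_right.trans hsup))
      _ ≤ C (ofLex q) ⊓ low F G (ofLex q).1 (ofLex q).2 :=
          inf_le_inf_left _ (cell_inf_sup_eq_low hF hG _ _).le
      _ = ⊥ := (hCL _).eq_bot
  exact hlex.comp (f := toLex) toLex.injective

section Spanning

variable {F : WithBot ℤ → L} {G : WithTop ℤ → L} (hF : Monotone F) (hG : Monotone G)
  {C : WithBot ℤ × WithTop ℤ → L} (hC : ∀ a b, cell F G a b ≤ low F G a b ⊔ C (a, b))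

include hF hC in
theorem cell_le_iSup_of_supBelow {a₀ : ℤ} (hFbot : F a₀ ≤ F ⊥) {b : WithTop ℤ}
    (hb : ∀ a, F a ⊓ supBelow G b ≤ ⨆ p, C p) (a : WithBot ℤ) : cell F G a b ≤ ⨆ p, C p := by
  have hbot : cell F G ⊥ b ≤ ⨆ p, C p :=
    (hC ⊥ b).trans (sup_le (sup_le (by simp) (hb ⊥)) (le_iSup C _))
  have hle : ∀ a : ℤ, a ≤ a₀ → cell F G a b ≤ ⨆ p, C p := fun a ha =>
    (inf_le_inf_right _ ((hF (WithBot.coe_le_coe.2 ha)).trans hFbot)).trans hbot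
  have hge : ∀ a : ℤ, a₀ ≤ a → cell F G a b ≤ ⨆ p, C p := by
    intro a ha
    induction a, ha using Int.leInduction with
    | base => exact hle a₀ le_rfl
    | succ a _ ih =>
      refine (hC _ b).trans (sup_le (sup_le ?_ (hb _)) (le_iSup C _))
      exact (inf_le_inf_right _ (supBelow_coe_withBot_le hF a)).trans ih
  induction a with
  | bot => exact hbot
  | coe a => exact (le_total a a₀).elim (hle a) (hge a)

include hF hG hC in
/-- `cell a b ≤ low a b ⊔ C (a, b)` reduces a cell to cells with smaller `a` or smaller `b`. The
descent terminates: `F` is constant below `a₀`, so one may jump to `a = ⊥` where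
`supBelow F ⊥ = ⊥`; `supBelow G ⊤` is already reached at `b₀`; and `G` vanishes at `b₁`. -/
theorem iSup_eq_top_of_cell_le {a₀ a₁ b₀ b₁ : ℤ} (hFbot : F a₀ ≤ F ⊥) (hFtop : F a₁ = ⊤)
    (hGbot : G b₁ = ⊥) (hGsup : supBelow G ⊤ ≤ G b₀) (hGtop : G ⊤ = ⊤) : ⨆ p, C p = ⊤ := by
  have hcoe : ∀ b : ℤ, ∀ a, cell F G a b ≤ ⨆ p, C p := by
    intro b
    rcases le_total b b₁ with hb | hb
    · exact fun a => inf_le_right.trans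
        ((hG (WithTop.coe_le_coe.2 hb)).trans (hGbot.le.trans bot_le))
    induction b, hb using Int.leInduction with
    | base => exact fun a => inf_le_right.trans (hGbot.le.trans bot_le)
    | succ b _ ih =>
      refine cell_le_iSup_of_supBelow hF hC hFbot fun a => le_trans ?_ (ih a)
      rw [supBelow_coe_withTop hG, add_sub_cancel_right]
      exact le_rfl
  have htop := cell_le_iSup_of_supBelow hF hC hFbot (b := ⊤) fun a =>
    (inf_le_inf_left _ hGsup).trans (hcoe b₀ a)
  simpa [cell, hFtop, hGtop] using htop a₁

end Spanning

end TwoFiltration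

section Subquotient

variable {R M N ι : Type*} [Ring R] [AddCommGroup M] [Module R M] [AddCommGroup N] [Module R N]

/-- `f` induces an isomorphism `C ⧸ L ≃ C' ⧸ L'` (when `L ≤ C` and `L' ≤ C'`). -/
structure InducesSubquotientEquiv (f : M →ₗ[R] N) (L C : Submodule R M) (L' C' : Submodule R N) :
    Prop where
  map_eq : C.map f = C'
  map_le : L.map f ≤ L'
  inf_comap_le : C ⊓ L'.comap f ≤ L

theorem InducesSubquotientEquiv.of_map_eq_of_comap_eq {f : M →ₗ[R] N}
    {A A₀ B B₀ : Submodule R M} {A' A₀' B' B₀' : Submodule R N} (hA : A.map f = A')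
    (hA₀ : A₀.map f = A₀') (hB : B'.comap f = B) (hB₀ : B₀'.comap f = B₀) (hA₀A : A₀ ≤ A) :
    InducesSubquotientEquiv f (A₀ ⊓ B ⊔ A ⊓ B₀) (A ⊓ B) (A₀' ⊓ B' ⊔ A' ⊓ B₀') (A' ⊓ B') where
  map_eq := by rw [← hB, ← map_inf_eq_map_inf_comap, hA]
  map_le := by
    rw [Submodule.map_sup, ← hB, ← hB₀, ← map_inf_eq_map_inf_comap, ← map_inf_eq_map_inf_comap,
      hA, hA₀]
  inf_comap_le := by
    rintro x ⟨⟨hxA, hxB⟩, hfx⟩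
    obtain ⟨u, ⟨huA₀, huB⟩, v, ⟨-, hvB₀⟩, huv⟩ := mem_sup.1 hfx
    rw [← hA₀] at huA₀
    obtain ⟨u₀, hu₀, rfl⟩ := huA₀
    have hu₀B : u₀ ∈ B := hB ▸ huB
    have hxu : x - u₀ ∈ B₀ :=
      hB₀ ▸ show f (x - u₀) ∈ B₀' by rwa [map_sub, ← huv, add_sub_cancel_left]
    simpa using add_mem (mem_sup_left ⟨hu₀, hu₀B⟩ : u₀ ∈ A₀ ⊓ B ⊔ A ⊓ B₀)
      (mem_sup_right ⟨sub_mem hxA (hA₀A hu₀), hxu⟩)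

structure IsComplBasis (L C : Submodule R M) (w : ι → M) : Prop where
  linearIndependent : LinearIndependent R w
  disjoint : Disjoint (span R (range w)) L
  sup_eq : span R (range w) ⊔ L = C

namespace IsComplBasis

variable {f : M →ₗ[R] N} {L C : Submodule R M} {L' C' : Submodule R N} {w : ι → M}

theorem span_le (hw : IsComplBasis L C w) : span R (range w) ≤ C :=
  hw.sup_eq ▸ le_sup_left

theorem map (hf : InducesSubquotientEquiv f L C L' C') (hL' : L' ≤ C')
    (hw : IsComplBasis L C w) : IsComplBasis L' C' (f ∘ w) := by
  have hspan : span R (range (f ∘ w)) = (span R (range w)).map f := by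
    rw [range_comp, map_span]
  have hdisj : Disjoint (span R (range w)) (L'.comap f) := by
    rw [disjoint_iff, eq_bot_iff, ← hw.disjoint.eq_bot]
    exact le_inf inf_le_left ((inf_le_inf_right _ hw.span_le).trans hf.inf_comap_le)
  refine ⟨hw.linearIndependent.map (hdisj.mono_right (comap_mono bot_le)), ?_, ?_⟩
  · rw [hspan, disjoint_iff, map_inf_eq_map_inf_comap, hdisj.eq_bot, Submodule.map_bot]
  · refine le_antisymm (sup_le ?_ hL') ?_
    · rw [hspan, ← hf.map_eq]
      exact map_mono hw.span_le
    · rw [← hf.map_eq, ← hw.sup_eq, Submodule.map_sup, hspan]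
      exact sup_le_sup_left hf.map_le _

theorem of_comp (hf : InducesSubquotientEquiv f L C L' C') (hL : L ≤ C) (hwC : ∀ i, w i ∈ C)
    (hw : IsComplBasis L' C' (f ∘ w)) : IsComplBasis L C w := by
  have hspan : span R (range (f ∘ w)) = (span R (range w)).map f := by
    rw [range_comp, map_span]
  have hSC : span R (range w) ≤ C := Submodule.span_le.2 (range_subset_iff.2 hwC)
  refine ⟨hw.linearIndependent.of_comp, disjoint_def.2 fun x hxS hxL => ?_,
    le_antisymm (sup_le hSC hL) fun x hx => ?_⟩
  · have hfx : f x = 0 := disjoint_def.1 hw.disjoint _ (hspan ▸ mem_map_of_mem hxS)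
      (hf.map_le (mem_map_of_mem hxL))
    exact disjoint_def.1 (range_ker_disjoint hw.linearIndependent) x hxS hfx
  · have hfx : f x ∈ span R (range (f ∘ w)) ⊔ L' := by
      rw [hw.sup_eq, ← hf.map_eq]
      exact mem_map_of_mem hx
    obtain ⟨y, hy, l, hl, hyl⟩ := mem_sup.1 hfx
    rw [hspan] at hy
    obtain ⟨s, hs, rfl⟩ := hy
    have hxs : x - s ∈ L := hf.inf_comap_le
      ⟨sub_mem hx (hSC hs), show f (x - s) ∈ L' by rwa [map_sub, ← hyl, add_sub_cancel_left]⟩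
    simpa using add_mem (mem_sup_left hs) (mem_sup_right hxs)

theorem exists_lift (hf : InducesSubquotientEquiv f L C L' C') (hL : L ≤ C) {w' : ι → N}
    (hw' : IsComplBasis L' C' w') : ∃ w, IsComplBasis L C w ∧ f ∘ w = w' := by
  have hpre : ∀ i, ∃ x ∈ C, f x = w' i := fun i => by
    rw [← mem_map, hf.map_eq]
    exact hw'.span_le (subset_span (mem_range_self i))
  choose w hwC hw using hpre
  have hfw : f ∘ w = w' := funext hw
  exact ⟨w, of_comp hf hL hwC (hfw ▸ hw'), hfw⟩

end IsComplBasis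

theorem exists_isComplBasis {K V : Type*} [Field K] [AddCommGroup V] [Module K V]
    [FiniteDimensional K V] {L C : Submodule K V} (h : L ≤ C) :
    ∃ (d : ℕ) (w : Fin d → V), IsComplBasis L C w := by
  obtain ⟨q, hq⟩ := L.exists_isCompl
  let b := Module.finBasis K ↥(q ⊓ C)
  have hspan : span K (range ((q ⊓ C).subtype ∘ b)) = q ⊓ C := by
    rw [range_comp, ← map_span, b.span_eq, Submodule.map_top, range_subtype]
  refine ⟨_, _, ⟨b.linearIndependent.map' _ (ker_subtype _), ?_, ?_⟩⟩
  · rw [hspan]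
    exact hq.disjoint.symm.mono_left inf_le_left
  · rw [hspan, sup_comm, ← sup_inf_assoc_of_le _ h, hq.sup_eq_top, top_inf_eq]

end Subquotient

section Thread

theorem exists_seq_forall_rel {α : ℕ → Type*} (x₀ : α 0) {R : ∀ n, α n → α (n + 1) → Prop}
    (h : ∀ n x, ∃ y, R n x y) : ∃ x : ∀ n, α n, ∀ n, R n (x n) (x (n + 1)) := by
  choose f hf using h
  exact ⟨fun n => Nat.rec x₀ f n, fun n => hf n _⟩

variable {W : ℤ → Type*} (σ : ∀ s t : ℤ, s ≤ t → W s → W t)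

/-- The family on all of `ℤ` determined by `x n ∈ W (t₀ - n)`: at `t`, push `x N` forward from
`t₀ - N = min t t₀`. Transporting along `σ` avoids casting between `W (t₀ - N)` and `W t`. -/
def thread (t₀ : ℤ) (x : ∀ n : ℕ, W (t₀ - n)) (t : ℤ) : W t :=
  σ (t₀ - (t₀ - t).toNat) t (by omega) (x (t₀ - t).toNat)

theorem sub_toNat_sub_mem {S : Set ℤ} {t₀ t : ℤ} (ht₀ : t₀ ∈ S) (ht : t ∈ S) :
    t₀ - ((t₀ - t).toNat : ℕ) ∈ S := by
  rcases le_total t t₀ with htt₀ | htt₀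
  · convert ht using 1; omega
  · convert ht₀ using 1; omega

variable {σ} (hid : ∀ t x, σ t t le_rfl x = x)
  (hcomp : ∀ r s t (hrs : r ≤ s) (hst : s ≤ t) x, σ s t hst (σ r s hrs x) = σ r t (hrs.trans hst) x)
  {S : Set ℤ} [S.OrdConnected] {t₀ : ℤ} (ht₀ : t₀ ∈ S) {x : ∀ n : ℕ, W (t₀ - n)}
  (hx : ∀ n : ℕ, t₀ - ↑(n + 1) ∈ S → σ _ _ (by omega) (x (n + 1)) = x n)
include hid hcomp ht₀ hx

theorem map_seq_of_le {m n : ℕ} (hnm : n ≤ m) (hm : t₀ - m ∈ S) :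
    σ (t₀ - m) (t₀ - n) (by omega) (x m) = x n := by
  induction m, hnm using Nat.le_induction with
  | base => exact hid _ _
  | succ m hnm ih =>
    have hm' : t₀ - m ∈ S := Set.OrdConnected.out' hm ht₀ ⟨by omega, by omega⟩
    rw [← hcomp _ (t₀ - m) _ (by omega) (by omega), hx m hm, ih hm']

theorem map_thread {s t : ℤ} (h : s ≤ t) (hs : s ∈ S) :
    σ s t h (thread σ t₀ x s) = thread σ t₀ x t := by
  unfold thread
  rw [hcomp, ← map_seq_of_le hid hcomp ht₀ hx (m := (t₀ - s).toNat) (n := (t₀ - t).toNat)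
    (by omega) (sub_toNat_sub_mem ht₀ hs), hcomp]

end Thread

namespace IntPersistence

noncomputable section

open TwoFiltration

variable {k : Type*} [Field k] {V : ℤ → Type*} [∀ t, AddCommGroup (V t)] [∀ t, Module k (V t)]
  (ρ : ∀ s t : ℤ, s ≤ t → V s →ₗ[k] V t)

def imFrom (a t : ℤ) : Submodule k (V t) :=
  if h : a ≤ t then LinearMap.range (ρ a t h) else ⊤

def kerTo (t b : ℤ) : Submodule k (V t) :=
  if h : t ≤ b + 1 then LinearMap.ker (ρ t (b + 1) h) else ⊥

/-- `imFilt ρ t a` consists of the vectors at time `t` born at time `a` or earlier, and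
`kerFilt ρ t b` of those that vanish by time `b + 1`. -/
def imFilt (t : ℤ) : WithBot ℤ → Submodule k (V t) :=
  WithBot.recBotCoe (⨅ a : ℤ, imFrom ρ a t) (imFrom ρ · t)

def kerFilt (t : ℤ) : WithTop ℤ → Submodule k (V t) :=
  WithTop.recTopCoe ⊤ (kerTo ρ t)

def intervalSet (p : WithBot ℤ × WithTop ℤ) : Set ℤ := {t | p.1 ≤ t ∧ (t : WithTop ℤ) ≤ p.2}

instance ordConnected_intervalSet (p : WithBot ℤ × WithTop ℤ) : (intervalSet p).OrdConnected :=
  ⟨fun _ hr _ ht _ hs =>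
    ⟨hr.1.trans (WithBot.coe_le_coe.2 hs.1), (WithTop.coe_le_coe.2 hs.2).trans ht.2⟩⟩

abbrev cellAt (t : ℤ) (p : WithBot ℤ × WithTop ℤ) : Submodule k (V t) :=
  cell (imFilt ρ t) (kerFilt ρ t) p.1 p.2

abbrev lowAt (t : ℤ) (p : WithBot ℤ × WithTop ℤ) : Submodule k (V t) :=
  low (imFilt ρ t) (kerFilt ρ t) p.1 p.2

variable {ρ} (hid : ∀ t : ℤ, ρ t t le_rfl = LinearMap.id)
  (hcomp : ∀ r s t : ℤ, ∀ (hrs : r ≤ s) (hst : s ≤ t),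
    (ρ s t hst).comp (ρ r s hrs) = ρ r t (hrs.trans hst))
  (hfd : ∀ t : ℤ, FiniteDimensional k (V t))

include hid in
theorem imFrom_self (t : ℤ) : imFrom ρ t t = ⊤ := by
  rw [imFrom, dif_pos le_rfl, hid, LinearMap.range_id]

include hid in
theorem kerTo_eq_bot {t b : ℤ} (h : b < t) : kerTo ρ t b = ⊥ := by
  unfold kerTo
  split_ifs with h'
  · obtain rfl : t = b + 1 := by omega
    rw [hid, LinearMap.ker_id]
  · rfl

include hcomp

theorem imFrom_mono {a a' t : ℤ} (h : a ≤ a') : imFrom ρ a t ≤ imFrom ρ a' t := by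
  by_cases h' : a' ≤ t
  · rw [imFrom, dif_pos (h.trans h'), imFrom, dif_pos h', ← hcomp a a' t h h',
      LinearMap.range_comp]
    exact LinearMap.map_le_range
  · unfold imFrom
    rw [dif_neg h']
    exact le_top

theorem kerTo_mono {t b b' : ℤ} (h : b ≤ b') : kerTo ρ t b ≤ kerTo ρ t b' := by
  by_cases h' : t ≤ b + 1
  · rw [kerTo, dif_pos h', kerTo, dif_pos (by omega), ← hcomp t (b + 1) (b' + 1) h' (by omega)]
    exact LinearMap.ker_le_ker_comp _ _
  · rw [kerTo, dif_neg h']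
    exact bot_le

theorem imFilt_mono (t : ℤ) : Monotone (imFilt ρ t) :=
  WithBot.monotone_iff.2 ⟨fun _ _ h => imFrom_mono hcomp h, fun a => iInf_le _ a⟩

theorem kerFilt_mono (t : ℤ) : Monotone (kerFilt ρ t) :=
  WithTop.monotone_iff.2 ⟨fun _ _ h => kerTo_mono hcomp h, fun _ => le_top⟩

theorem lowAt_le_cellAt (t : ℤ) (p : WithBot ℤ × WithTop ℤ) : lowAt ρ t p ≤ cellAt ρ t p :=
  low_le_cell (imFilt_mono hcomp t) (kerFilt_mono hcomp t) _ _

include hfd in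
theorem exists_imFilt_bot_eq (t : ℤ) : ∃ a₀ : ℤ, ∀ a ≤ a₀, imFilt ρ t ⊥ = imFrom ρ a t := by
  have := hfd t
  obtain ⟨a₀, h⟩ := Monotone.exists_forall_le_eq fun a a' (h : a ≤ a') =>
    imFrom_mono hcomp h (t := t)
  refine ⟨a₀, fun a ha => (h a ha).symm ▸ le_antisymm (iInf_le _ _) (le_iInf fun a' => ?_)⟩
  rcases le_total a' a₀ with h' | h'
  · exact (h a' h').ge
  · exact imFrom_mono hcomp h'

include hfd in
theorem exists_iSup_kerTo_eq (t : ℤ) : ∃ b₀ : ℤ, ∀ b ≥ b₀, ⨆ b', kerTo ρ t b' = kerTo ρ t b := by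
  have := hfd t
  obtain ⟨b₀, h⟩ := Monotone.exists_forall_ge_eq fun b b' (h : b ≤ b') =>
    kerTo_mono hcomp h (t := t)
  refine ⟨b₀, fun b hb => (h b hb).symm ▸ le_antisymm (iSup_le fun b' => ?_) (le_iSup _ _)⟩
  rcases le_total b' b₀ with h' | h'
  · exact kerTo_mono hcomp h'
  · exact (h b' h').le

section Transport

variable {s t : ℤ} (h : s ≤ t)

theorem map_imFrom {a : ℤ} (ha : a ≤ s) : (imFrom ρ a s).map (ρ s t h) = imFrom ρ a t := by
  rw [imFrom, dif_pos ha, imFrom, dif_pos (ha.trans h), ← LinearMap.range_comp, hcomp]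

theorem comap_kerTo {b : ℤ} (hb : t ≤ b + 1) : (kerTo ρ t b).comap (ρ s t h) = kerTo ρ s b := by
  rw [kerTo, dif_pos hb, kerTo, dif_pos (h.trans hb), ← LinearMap.ker_comp, hcomp]

include hfd in
theorem map_imFilt {a : WithBot ℤ} (ha : a ≤ s) : (imFilt ρ s a).map (ρ s t h) = imFilt ρ t a := by
  induction a with
  | bot =>
    obtain ⟨a₁, h₁⟩ := exists_imFilt_bot_eq hcomp hfd s
    obtain ⟨a₂, h₂⟩ := exists_imFilt_bot_eq hcomp hfd t
    rw [h₁ (min (min a₁ a₂) s) (by omega), h₂ (min (min a₁ a₂) s) (by omega)]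
    exact map_imFrom hcomp h (by omega)
  | coe a => exact map_imFrom hcomp h (WithBot.coe_le_coe.1 ha)

include hfd in
theorem map_supBelow_imFilt {a : WithBot ℤ} (ha : a ≤ s) :
    (supBelow (imFilt ρ s) a).map (ρ s t h) = supBelow (imFilt ρ t) a := by
  simp only [supBelow, Submodule.map_iSup]
  exact iSup_congr fun a' => iSup_congr fun ha' => map_imFilt hcomp hfd h (ha'.le.trans ha)

theorem comap_kerFilt {b : WithTop ℤ} (hb : t ≤ b) :
    (kerFilt ρ t b).comap (ρ s t h) = kerFilt ρ s b := by
  induction b with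
  | top => exact Submodule.comap_top _
  | coe b => exact comap_kerTo hcomp h (by have := WithTop.coe_le_coe.1 hb; omega)

include hfd in
theorem comap_supBelow_kerFilt {b : WithTop ℤ} (hb : t ≤ b) :
    (supBelow (kerFilt ρ t) b).comap (ρ s t h) = supBelow (kerFilt ρ s) b := by
  induction b with
  | top =>
    obtain ⟨b₁, h₁⟩ := exists_iSup_kerTo_eq hcomp hfd s
    obtain ⟨b₂, h₂⟩ := exists_iSup_kerTo_eq hcomp hfd t
    rw [supBelow_top_withTop, supBelow_top_withTop]
    change (⨆ b : ℤ, kerTo ρ t b).comap (ρ s t h) = ⨆ b : ℤ, kerTo ρ s b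
    rw [h₁ (max (max b₁ b₂) t) (by omega), h₂ (max (max b₁ b₂) t) (by omega)]
    exact comap_kerTo hcomp h (by omega)
  | coe b =>
    rw [supBelow_coe_withTop (kerFilt_mono hcomp t), supBelow_coe_withTop (kerFilt_mono hcomp s)]
    exact comap_kerTo hcomp h (by have := WithTop.coe_le_coe.1 hb; omega)

include hfd in
theorem inducesSubquotientEquiv_cellAt {p : WithBot ℤ × WithTop ℤ} (hs : s ∈ intervalSet p)
    (ht : t ∈ intervalSet p) :
    InducesSubquotientEquiv (ρ s t h) (lowAt ρ s p) (cellAt ρ s p) (lowAt ρ t p) (cellAt ρ t p) :=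
  .of_map_eq_of_comap_eq (map_imFilt hcomp hfd h hs.1) (map_supBelow_imFilt hcomp hfd h hs.1)
    (comap_kerFilt hcomp h ht.2) (comap_supBelow_kerFilt hcomp hfd h ht.2)
    (supBelow_le_self (imFilt_mono hcomp s) _)

theorem cellAt_le_ker {p : WithBot ℤ × WithTop ℤ} (hs : s ∈ intervalSet p)
    (ht : t ∉ intervalSet p) : cellAt ρ s p ≤ LinearMap.ker (ρ s t h) := by
  obtain ⟨a, b⟩ := p
  have hb : b < t := not_le.1 fun htb => ht ⟨hs.1.trans (WithBot.coe_le_coe.2 h), htb⟩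
  induction b with
  | top => exact absurd hb not_top_lt
  | coe b =>
    have hbt := WithTop.coe_lt_coe.1 hb
    have hsb := WithTop.coe_le_coe.1 hs.2
    refine inf_le_right.trans ?_
    change kerTo ρ s b ≤ _
    rw [kerTo, dif_pos (by omega), ← hcomp s (b + 1) t (by omega) (by omega)]
    exact LinearMap.ker_le_ker_comp _ _

end Transport

omit hcomp in
include hid in
theorem cellAt_le_lowAt_of_notMem {t : ℤ} {p : WithBot ℤ × WithTop ℤ} (ht : t ∉ intervalSet p) :
    cellAt ρ t p ≤ lowAt ρ t p := by
  obtain ⟨a, b⟩ := p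
  simp only [intervalSet, Set.mem_ofPred_eq, not_and_or, not_le] at ht
  rcases ht with ha | hb
  · have htop : supBelow (imFilt ρ t) a = ⊤ :=
      top_le_iff.1 ((imFrom_self hid t).ge.trans (le_supBelow (F := imFilt ρ t) ha))
    exact le_sup_of_le_left (inf_le_inf_right _ (htop ▸ le_top))
  · induction b with
    | top => exact absurd hb not_top_lt
    | coe b =>
      exact inf_le_right.trans ((kerTo_eq_bot hid (WithTop.coe_lt_coe.1 hb)).le.trans bot_le)

include hcomp hfd in
theorem exists_seq_isComplBasis {p : WithBot ℤ × WithTop ℤ} {t₀ : ℤ} (ht₀ : t₀ ∈ intervalSet p) :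
    ∃ (d : ℕ) (x : ∀ n : ℕ, Fin d → V (t₀ - n)),
      (∀ n : ℕ, t₀ - n ∈ intervalSet p →
        IsComplBasis (lowAt ρ (t₀ - n) p) (cellAt ρ (t₀ - n) p) (x n)) ∧
      ∀ n : ℕ, t₀ - ↑(n + 1) ∈ intervalSet p → ρ _ _ (by omega) ∘ x (n + 1) = x n := by
  have := hfd (t₀ - (0 : ℕ))
  obtain ⟨d, w₀, hw₀⟩ := exists_isComplBasis (lowAt_le_cellAt hcomp (t₀ - (0 : ℕ)) p)
  let α (n : ℕ) := {w : Fin d → V (t₀ - n) //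
    t₀ - n ∈ intervalSet p → IsComplBasis (lowAt ρ (t₀ - n) p) (cellAt ρ (t₀ - n) p) w}
  obtain ⟨x, hx⟩ := exists_seq_forall_rel (α := α) ⟨w₀, fun _ => hw₀⟩
    (R := fun n y z => t₀ - ↑(n + 1) ∈ intervalSet p → ρ _ _ (by omega) ∘ z.1 = y.1) fun n y => by
      by_cases hn : t₀ - ↑(n + 1) ∈ intervalSet p
      · have hn' : t₀ - n ∈ intervalSet p := Set.OrdConnected.out' hn ht₀ ⟨by omega, by omega⟩
        obtain ⟨z, hz, hρz⟩ := (y.2 hn').exists_lift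
          (inducesSubquotientEquiv_cellAt hcomp hfd _ hn hn') (lowAt_le_cellAt hcomp _ p)
        exact ⟨⟨z, fun _ => hz⟩, fun _ => hρz⟩
      · exact ⟨⟨0, fun h => absurd h hn⟩, fun h => absurd h hn⟩
  exact ⟨d, fun n => (x n).1, fun n => (x n).2, hx⟩

include hid hcomp hfd in
theorem exists_intervalFamily (p : WithBot ℤ × WithTop ℤ) :
    ∃ (d : ℕ) (w : ∀ t, Fin d → V t),
      (∀ t ∈ intervalSet p, IsComplBasis (lowAt ρ t p) (cellAt ρ t p) (w t)) ∧
      ∀ s t (h : s ≤ t) (i : Fin d), s ∈ intervalSet p →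
        ρ s t h (w s i) = if t ∈ intervalSet p then w t i else 0 := by
  rcases (intervalSet p).eq_empty_or_nonempty with hp | ⟨t₀, ht₀⟩
  · exact ⟨0, fun _ => 0, by simp [hp], by simp [hp]⟩
  obtain ⟨d, x, hxbasis, hx⟩ := exists_seq_isComplBasis hcomp hfd ht₀
  let σ (s t : ℤ) (h : s ≤ t) (y : Fin d → V s) : Fin d → V t := ρ s t h ∘ y
  have hthread : ∀ s t (h : s ≤ t), s ∈ intervalSet p →
      σ s t h (thread σ t₀ x s) = thread σ t₀ x t := fun s t h hs =>
    map_thread (fun t y => by simp [σ, hid])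
      (fun r s t hrs hst y => funext fun i => LinearMap.congr_fun (hcomp r s t hrs hst) (y i))
      ht₀ hx h hs
  have hbasis : ∀ t ∈ intervalSet p,
      IsComplBasis (lowAt ρ t p) (cellAt ρ t p) (thread σ t₀ x t) := fun t ht => by
    have hN := sub_toNat_sub_mem ht₀ ht
    exact (hxbasis _ hN).map (inducesSubquotientEquiv_cellAt hcomp hfd _ hN ht)
      (lowAt_le_cellAt hcomp t p)
  refine ⟨d, thread σ t₀ x, hbasis, fun s t h i hs => ?_⟩
  split_ifs with ht
  · exact congrFun (hthread s t h hs) i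
  · exact cellAt_le_ker hcomp h hs ht ((hbasis s hs).span_le (subset_span (mem_range_self i)))

section Decomposition

variable {d : WithBot ℤ × WithTop ℤ → ℕ} (w : ∀ p t, Fin (d p) → V t)

variable (k) in
def summand (t : ℤ) (p : WithBot ℤ × WithTop ℤ) : Submodule k (V t) :=
  if t ∈ intervalSet p then span k (range (w p t)) else ⊥

variable {w} (hw : ∀ p, ∀ t ∈ intervalSet p, IsComplBasis (lowAt ρ t p) (cellAt ρ t p) (w p t))
include hw

theorem iSupIndep_summand (t : ℤ) : iSupIndep (summand k w t) := by
  refine iSupIndep_of_disjoint_low (imFilt_mono hcomp t) (kerFilt_mono hcomp t)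
    (fun p => ?_) fun p => ?_ <;> by_cases ht : t ∈ intervalSet p <;> simp only [summand, ht]
  · exact (hw p t ht).span_le
  · exact bot_le
  · exact (hw p t ht).disjoint
  · exact disjoint_bot_left

include hid hfd in
theorem iSup_summand_eq_top (t : ℤ) : ⨆ p, summand k w t p = ⊤ := by
  obtain ⟨a₀, ha₀⟩ := exists_imFilt_bot_eq hcomp hfd t
  obtain ⟨b₀, hb₀⟩ := exists_iSup_kerTo_eq hcomp hfd t
  refine iSup_eq_top_of_cell_le (imFilt_mono hcomp t) (kerFilt_mono hcomp t) (fun a b => ?_)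
    (ha₀ a₀ le_rfl).ge (imFrom_self hid t) (kerTo_eq_bot hid (b := t - 1) (by omega))
    (supBelow_top_withTop.trans_le (hb₀ b₀ le_rfl).le) rfl
  by_cases ht : t ∈ intervalSet (a, b)
  · rw [summand, if_pos ht, sup_comm, (hw _ t ht).sup_eq]
  · exact le_sup_of_le_left (cellAt_le_lowAt_of_notMem hid ht)

include hid hfd in
theorem exists_basis_eq_intervalFamily (t : ℤ) :
    ∃ b : Module.Basis (Σ p : {p // t ∈ intervalSet p}, Fin (d p.1)) k (V t),
      ∀ j, b j = w j.1.1 t j.2 := by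
  have hindep : iSupIndep fun p : {p // t ∈ intervalSet p} => span k (range (w p.1 t)) := by
    convert (iSupIndep_summand hcomp hw t).comp Subtype.val_injective using 1
    funext p
    simp [summand, p.2]
  have hli := linearIndependent_iUnion_finite (fun p => (hw p.1 t p.2).linearIndependent)
    fun p s _ hp => hindep.disjoint_biSup hp
  have hsp : ⊤ ≤ span k (range fun j : Σ p : {p // t ∈ intervalSet p}, Fin (d p.1) =>
      w j.1.1 t j.2) := by
    rw [← iSup_summand_eq_top hid hcomp hfd hw t]
    refine iSup_le fun p => ?_
    unfold summand
    split_ifs with hp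
    · exact span_mono (range_subset_iff.2 fun i => ⟨⟨⟨p, hp⟩, i⟩, rfl⟩)
    · exact bot_le
  exact ⟨.mk hli hsp, Module.Basis.mk_apply hli hsp⟩

end Decomposition

end

end IntPersistence

open IntPersistence

theorem repr_map_eq_intervalSumMap {k : Type} [Field k] {J : Type} {I : J → Set ℤ} {s t : ℤ}
    {M N : Type*} [AddCommGroup M] [Module k M] [AddCommGroup N] [Module k N]
    (bs : Module.Basis {j // s ∈ I j} k M) (bt : Module.Basis {j // t ∈ I j} k N) (f : M →ₗ[k] N)
    (hf : ∀ j, f (bs j) = if h : t ∈ I j.1 then bt ⟨j.1, h⟩ else 0) (v : M) :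
    bt.repr (f v) = intervalSumMap k I s t (bs.repr v) := by
  suffices bt.repr.toLinearMap ∘ₗ f = intervalSumMap k I s t ∘ₗ bs.repr.toLinearMap from
    LinearMap.congr_fun this v
  refine bs.ext fun j => ?_
  simp only [LinearMap.comp_apply, LinearEquiv.coe_coe, hf, Module.Basis.repr_self, intervalSumMap,
    Finsupp.lsum_single]
  split_ifs <;> simp

/-- Crawley-Boevey's theorem: every pointwise finite-dimensional persistence module
indexed by `(ℤ, ≤)` is isomorphic to a direct sum of interval modules. -/
theorem crawleyBoevey_int
    (k : Type) [Field k]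
    (V : ℤ → Type) [∀ t, AddCommGroup (V t)] [∀ t, Module k (V t)]
    (ρ : ∀ s t : ℤ, s ≤ t → (V s →ₗ[k] V t))
    (hid : ∀ t : ℤ, ρ t t le_rfl = LinearMap.id)
    (hcomp : ∀ r s t : ℤ, ∀ (hrs : r ≤ s) (hst : s ≤ t),
      (ρ s t hst).comp (ρ r s hrs) = ρ r t (hrs.trans hst))
    (hfd : ∀ t : ℤ, FiniteDimensional k (V t)) :
    ∃ (J : Type) (I : J → Set ℤ),
      (∀ j, (I j).Nonempty) ∧
      (∀ j, ∀ r s t : ℤ, r ∈ I j → t ∈ I j → r ≤ s → s ≤ t → s ∈ I j) ∧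
      ∃ e : ∀ t : ℤ, V t ≃ₗ[k] ({j : J // t ∈ I j} →₀ k),
        ∀ (s t : ℤ) (h : s ≤ t) (v : V s),
          e t (ρ s t h v) = intervalSumMap k I s t (e s v) := by
  choose d w hw hmap using exists_intervalFamily hid hcomp hfd
  choose b hb using exists_basis_eq_intervalFamily hid hcomp hfd hw
  let J := Σ p : {p : WithBot ℤ × WithTop ℤ // (intervalSet p).Nonempty}, Fin (d p)
  let I : J → Set ℤ := fun j => intervalSet j.1.1
  let reindex (t : ℤ) : {j : J // t ∈ I j} ≃ Σ p : {p // t ∈ intervalSet p}, Fin (d p.1) :=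
    { toFun := fun j => ⟨⟨j.1.1.1, j.2⟩, j.1.2⟩
      invFun := fun j => ⟨⟨⟨j.1.1, t, j.1.2⟩, j.2⟩, j.1.2⟩
      left_inv := fun _ => rfl
      right_inv := fun _ => rfl }
  refine ⟨J, I, fun j => j.1.2, fun j r s t hr ht hrs hst => Set.OrdConnected.out' hr ht ⟨hrs, hst⟩,
    fun t => ((b t).reindex (reindex t).symm).repr,
    fun s t h v => repr_map_eq_intervalSumMap _ _ _ (fun j => ?_) v⟩
  simp only [Module.Basis.reindex_apply, Equiv.symm_symm, hb]
  exact (hmap _ s t h _ j.2).trans dite_eq_ite.symm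
end

section
/- Interleaving of Vietoris–Rips and Čech complexes in Euclidean space: let n ≥ 1, let σ be a nonempty finite set of points in ℝⁿ (Euclidean space with the standard norm), and let r > 0. Then: (a) if the intersection ⋂_{x ∈ σ} B̄(x, r) of the closed balls of radius r centered at the points of σ is nonempty, then ‖x − y‖ ≤ 2r for all x, y ∈ σ; and (b) conversely, if ‖x − y‖ ≤ 2r for all x, y ∈ σ, then the intersection ⋂_{x ∈ σ} B̄(x, √2·r) of the closed balls of radius √2·r centered at the points of σ is nonempty. Consequently, for a finite point cloud X ⊂ ℝⁿ, every simplex of the Čech complex Č_r(X) is a simplex of the Vietoris–Rips complex V_r(X), and every simplex of V_r(X) is a simplex of Č_{√2 r}(X), giving the inclusions V_r(X) ⊆ Č_{√2 r}(X) ⊆ V_{√2 r}(X). -/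
/-! Part (a) is the triangle inequality through a common point of the balls. For part (b), take a
point `c` minimizing the largest distance `R` to the points of `σ` (it exists by properness).
If `R > √2 r`, then any two points `x, y` at distance `R` from `c` satisfy
`‖x - y‖² ≤ 4 r² < 2 R² = ‖x - c‖² + ‖y - c‖²`, so `x - c` and `y - c` form an acute angle.
Hence every farthest point has a positive inner product with the sum `v` of these vectors, and
moving `c` slightly in the direction `v` brings all points of `σ` strictly closer than `R`,
contradicting minimality. -/

open Metric Filter Topology
open scoped InnerProductSpace

lemma dist_le_two_mul_of_mem_closedBall {X : Type*} [PseudoMetricSpace X] {x y c : X} {r : ℝ}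
    (hx : c ∈ closedBall x r) (hy : c ∈ closedBall y r) : dist x y ≤ 2 * r :=
  calc dist x y ≤ dist c x + dist c y := dist_triangle_left x y c
    _ ≤ 2 * r := by rw [two_mul]; exact add_le_add hx hy

lemma exists_forall_sup'_dist_le {X : Type*} [PseudoMetricSpace X] [ProperSpace X] (σ : Finset X)
    (hσ : σ.Nonempty) : ∃ c, ∀ d, σ.sup' hσ (dist · c) ≤ σ.sup' hσ (dist · d) := by
  obtain ⟨x₀, hx₀⟩ := id hσ
  have : Nonempty X := ⟨x₀⟩
  refine (Continuous.finset_sup'_apply hσ fun x _ => continuous_const.dist continuous_id)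
    |>.exists_forall_le ?_
  exact tendsto_atTop_mono (fun c => Finset.le_sup' (dist · c) hx₀)
    (tendsto_dist_left_cocompact_atTop x₀)

section InnerProductSpace

variable {E : Type*} [NormedAddCommGroup E] [InnerProductSpace ℝ E]

lemma inner_pos_of_norm_sub_sq_lt {u w : E} (h : ‖u - w‖ ^ 2 < ‖u‖ ^ 2 + ‖w‖ ^ 2) :
    0 < ⟪u, w⟫_ℝ := by
  rw [norm_sub_sq_real] at h
  linarith

lemma eventually_norm_sub_smul_lt_of_norm_lt (u v : E) {R : ℝ} (hu : ‖u‖ < R) :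
    ∀ᶠ t in 𝓝[>] (0 : ℝ), ‖u - t • v‖ < R := by
  have hcont : Continuous fun t : ℝ => ‖u - t • v‖ := by fun_prop
  exact nhdsWithin_le_nhds ((hcont.tendsto' 0 ‖u‖ (by simp)).eventually_lt_const hu)

lemma eventually_norm_sub_smul_lt_of_inner_pos {u v : E} {R : ℝ} (hu : ‖u‖ ≤ R)
    (huv : 0 < ⟪u, v⟫_ℝ) : ∀ᶠ t in 𝓝[>] (0 : ℝ), ‖u - t • v‖ < R := by
  have hsmall : ∀ᶠ t in 𝓝 (0 : ℝ), t * ‖v‖ ^ 2 < 2 * ⟪u, v⟫_ℝ :=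
    ((continuous_id.mul continuous_const).tendsto' 0 0 (by simp)).eventually_lt_const
      (by linarith)
  filter_upwards [nhdsWithin_le_nhds hsmall, self_mem_nhdsWithin] with t ht (ht₀ : 0 < t)
  have hexp : ‖u - t • v‖ ^ 2 = ‖u‖ ^ 2 - t * (2 * ⟪u, v⟫_ℝ - t * ‖v‖ ^ 2) := by
    rw [norm_sub_sq_real, inner_smul_right, norm_smul, mul_pow, Real.norm_eq_abs, sq_abs]
    ring
  have hsq : ‖u - t • v‖ ^ 2 < ‖u‖ ^ 2 := by
    rw [hexp]
    nlinarith
  exact (lt_of_pow_lt_pow_left₀ 2 (norm_nonneg u) hsq).trans_le hu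

theorem exists_forall_norm_sub_le_sqrt_two_mul [ProperSpace E] (σ : Finset E) {r : ℝ}
    (h : ∀ x ∈ σ, ∀ y ∈ σ, ‖x - y‖ ≤ 2 * r) : ∃ c, ∀ x ∈ σ, ‖x - c‖ ≤ √2 * r := by
  rcases σ.eq_empty_or_nonempty with rfl | hσ
  · exact ⟨0, by simp⟩
  obtain ⟨c, hc⟩ := exists_forall_sup'_dist_le σ hσ
  set R := σ.sup' hσ (dist · c)
  have hle : ∀ x ∈ σ, ‖x - c‖ ≤ R := fun x hx => dist_eq_norm x c ▸ Finset.le_sup' (dist · c) hx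
  refine ⟨c, fun x hx => (hle x hx).trans ?_⟩
  obtain ⟨x₀, hx₀⟩ := id hσ
  have hr : 0 ≤ r := by simpa using h x₀ hx₀ x₀ hx₀
  by_contra! hR
  have hR2 : 2 * r ^ 2 < R ^ 2 := by
    have h2 := Real.sq_sqrt (show (0 : ℝ) ≤ 2 by norm_num)
    nlinarith [mul_self_lt_mul_self (by positivity) hR]
  set v := ∑ y ∈ σ with ‖y - c‖ = R, (y - c)
  have hv : ∀ x ∈ σ, ‖x - c‖ = R → 0 < ⟪x - c, v⟫_ℝ := by
    intro x hx hxR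
    rw [inner_sum]
    refine Finset.sum_pos (fun y hy => ?_) ⟨x, Finset.mem_filter.2 ⟨hx, hxR⟩⟩
    obtain ⟨hy, hyR⟩ := Finset.mem_filter.1 hy
    apply inner_pos_of_norm_sub_sq_lt
    rw [hxR, hyR, sub_sub_sub_cancel_right]
    nlinarith [h x hx y hy, norm_nonneg (x - y)]
  have hdescent : ∀ᶠ t in 𝓝[>] (0 : ℝ), ∀ x ∈ σ, ‖(x - c) - t • v‖ < R := by
    refine (eventually_all_finset σ).2 fun x hx => ?_
    rcases (hle x hx).lt_or_eq with hlt | heq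
    · exact eventually_norm_sub_smul_lt_of_norm_lt _ _ hlt
    · exact eventually_norm_sub_smul_lt_of_inner_pos (hle x hx) (hv x hx heq)
  obtain ⟨t, ht⟩ := hdescent.exists
  refine (hc (c + t • v)).not_gt ((Finset.sup'_lt_iff hσ).2 fun x hx => ?_)
  rw [dist_eq_norm, ← sub_sub]
  exact ht x hx

end InnerProductSpace

theorem cech_rips_interleaving_general
    (n : ℕ)
    (σ : Finset (EuclideanSpace ℝ (Fin n)))
    (r : ℝ) :
    ((⋂ x ∈ σ, closedBall x r).Nonempty →
      ∀ x ∈ σ, ∀ y ∈ σ, ‖x - y‖ ≤ 2 * r) ∧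
    ((∀ x ∈ σ, ∀ y ∈ σ, ‖x - y‖ ≤ 2 * r) →
      (⋂ x ∈ σ, closedBall x (Real.sqrt 2 * r)).Nonempty) := by
  constructor
  · rintro ⟨c, hc⟩ x hx y hy
    simp only [Set.mem_iInter] at hc
    rw [← dist_eq_norm]
    exact dist_le_two_mul_of_mem_closedBall (hc x hx) (hc y hy)
  · intro h
    obtain ⟨c, hc⟩ := exists_forall_norm_sub_le_sqrt_two_mul σ h
    refine ⟨c, Set.mem_iInter₂.2 fun x hx => ?_⟩
    rw [mem_closedBall, dist_comm, dist_eq_norm]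
    exact hc x hx

/-- Interleaving of Vietoris–Rips and Čech complexes in Euclidean space:
(a) a Čech simplex at radius `r` is a Rips simplex at radius `r`, and
(b) a Rips simplex at radius `r` is a Čech simplex at radius `√2 · r`. -/
theorem cech_rips_interleaving
    (n : ℕ) (hn : 1 ≤ n)
    (σ : Finset (EuclideanSpace ℝ (Fin n))) (hσ : σ.Nonempty)
    (r : ℝ) (hr : 0 < r) :
    ((⋂ x ∈ σ, closedBall x r).Nonempty →
      ∀ x ∈ σ, ∀ y ∈ σ, ‖x - y‖ ≤ 2 * r) ∧
    ((∀ x ∈ σ, ∀ y ∈ σ, ‖x - y‖ ≤ 2 * r) →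
      (⋂ x ∈ σ, closedBall x (Real.sqrt 2 * r)).Nonempty) :=
  cech_rips_interleaving_general n σ r
end

section
/- The zeroth homology pre-cosheaf satisfies the cosheaf axiom on two-element covers (van Kampen for path components): let k be a field, X a topological space, and A, B open subsets with A ∪ B = X. For a topological space Z, let k[π₀ Z] denote the free k-vector space on the set of path components of Z, and note that any continuous map (in particular any inclusion) induces a k-linear map between these free vector spaces. Then the sequence k[π₀(A ∩ B)] → k[π₀ A] × k[π₀ B] → k[π₀ X] → 0 is exact, where the first map sends a path component c of A ∩ B to (the class of c in A, −(the class of c in B)), and the second map sends (a, b) to the image of a in k[π₀ X] plus the image of b in k[π₀ X]. That is, the second map is surjective and its kernel equals the image of the first map. -/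
open scoped Classical

/-- The map on path components induced by a continuous map. -/
def pi0Map {X Y : Type} [TopologicalSpace X] [TopologicalSpace Y] (f : C(X, Y)) :
    ZerothHomotopy X → ZerothHomotopy Y :=
  Quotient.map f (fun _ _ h => Nonempty.map (fun γ => γ.map f.continuous) h)

/-- The linear map `k[π₀ Z] → k[π₀ Z']` between free vector spaces induced by a
continuous map `Z → Z'`. -/
noncomputable def pi0LinearMap (k : Type) [Field k]
    {X Y : Type} [TopologicalSpace X] [TopologicalSpace Y] (f : C(X, Y)) :
    (ZerothHomotopy X →₀ k) →ₗ[k] (ZerothHomotopy Y →₀ k) :=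
  Finsupp.lmapDomain k k (pi0Map f)

/-!
Let `Q` be the cokernel of the antidiagonal map `k[π₀(A ∩ B)] → k[π₀ A] × k[π₀ B]`. Sending a
point `x` to the class in `Q` of its path component in `A`, or in `B`, is well defined because
`Q` kills `([x]_A, -[x]_B)` for `x ∈ A ∩ B`. This assignment is constant along paths inside `A`
and inside `B`; as `A` and `B` are open, a path in `X` is locally a path in `A` or in `B`, so
along it the assignment is locally constant on `[0, 1]`, hence constant. It therefore induces
`k[π₀ X] → Q`, whose composite with the sum map is the quotient map: the kernel of the sum map
lies in the image of the antidiagonal map.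
-/

open Set Topology unitInterval

theorem Joined.apply_eq_of_locally_joinedIn {X Y : Type*} [TopologicalSpace X] {f : X → Y}
    (hf : ∀ x, ∃ U ∈ 𝓝 x, ∀ y z, JoinedIn U y z → f y = f z) {x y : X} (h : Joined x y) :
    f x = f y := by
  obtain ⟨γ⟩ := h
  have : LocallyPathConnectedSpace I := (convex_Icc (0 : ℝ) 1).locallyPathConnectedSpace
  have hloc : IsLocallyConstant (f ∘ γ) := by
    refine (IsLocallyConstant.iff_eventually_eq _).2 fun t => ?_
    obtain ⟨U, hU, hfU⟩ := hf (γ t)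
    obtain ⟨V, ⟨hV, hVconn⟩, hVU⟩ :=
      (path_connected_basis t).mem_iff.mp (γ.continuous.continuousAt hU)
    filter_upwards [hV] with u hu
    exact hfU _ _ (((hVconn.joinedIn u hu t (mem_of_mem_nhds hV)).map γ.continuous).mono
      (image_subset_iff.mpr hVU))
  simpa using hloc.apply_eq_of_preconnectedSpace 0 1

section MayerVietoris

variable (k : Type) [Field k] {X : Type} [TopologicalSpace X] (A B : Set X)

noncomputable def pi0AntidiagMap :
    (ZerothHomotopy ↥(A ∩ B) →₀ k) →ₗ[k] (ZerothHomotopy A →₀ k) × (ZerothHomotopy B →₀ k) :=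
  LinearMap.prod
    (pi0LinearMap k ⟨Set.inclusion Set.inter_subset_left,
      continuous_inclusion Set.inter_subset_left⟩)
    (-(pi0LinearMap k ⟨Set.inclusion Set.inter_subset_right,
      continuous_inclusion Set.inter_subset_right⟩))

noncomputable def pi0SumMap :
    ((ZerothHomotopy A →₀ k) × (ZerothHomotopy B →₀ k)) →ₗ[k] (ZerothHomotopy X →₀ k) :=
  (pi0LinearMap k ⟨Subtype.val, continuous_subtype_val⟩).comp (LinearMap.fst k _ _) +
    (pi0LinearMap k ⟨Subtype.val, continuous_subtype_val⟩).comp (LinearMap.snd k _ _)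

variable {k} in
@[simp]
theorem pi0LinearMap_single {Y Z : Type} [TopologicalSpace Y] [TopologicalSpace Z] (f : C(Y, Z))
    (y : Y) (r : k) :
    pi0LinearMap k f (Finsupp.single (.mk y) r) = Finsupp.single (.mk (f y)) r :=
  Finsupp.mapDomain_single

theorem pi0SumMap_comp_pi0AntidiagMap : pi0SumMap k A B ∘ₗ pi0AntidiagMap k A B = 0 := by
  refine Finsupp.lhom_ext fun c r => ?_
  induction c
  simp [pi0SumMap, pi0AntidiagMap]

theorem pi0SumMap_surjective (hAB : A ∪ B = univ) : Function.Surjective (pi0SumMap k A B) := by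
  rw [← LinearMap.range_eq_top, eq_top_iff, ← Finsupp.iSup_lsingle_range, iSup_le_iff]
  rintro c _ ⟨r, rfl⟩
  induction c with | mk x
  rcases (eq_univ_iff_forall.mp hAB x : x ∈ A ∪ B) with hx | hx
  · exact ⟨(Finsupp.single (.mk ⟨x, hx⟩) r, 0), by simp [pi0SumMap]⟩
  · exact ⟨(0, Finsupp.single (.mk ⟨x, hx⟩) r), by simp [pi0SumMap]⟩

abbrev Pi0MVCoker := ((ZerothHomotopy A →₀ k) × (ZerothHomotopy B →₀ k)) ⧸
  LinearMap.range (pi0AntidiagMap k A B)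

variable {A B}

noncomputable def pi0MVCokerPoint (hAB : A ∪ B = univ) (x : X) : Pi0MVCoker k A B :=
  if hx : x ∈ A then Submodule.Quotient.mk (Finsupp.single (.mk ⟨x, hx⟩) 1, 0)
  else Submodule.Quotient.mk
    (0, Finsupp.single (.mk ⟨x, (eq_univ_iff_forall.mp hAB x).resolve_left hx⟩) 1)

theorem pi0MVCokerPoint_of_mem_left (hAB : A ∪ B = univ) {x : X} (hx : x ∈ A) :
    pi0MVCokerPoint k hAB x = Submodule.Quotient.mk (Finsupp.single (.mk ⟨x, hx⟩) 1, 0) :=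
  dif_pos hx

theorem pi0MVCokerPoint_of_mem_right (hAB : A ∪ B = univ) {x : X} (hx : x ∈ B) :
    pi0MVCokerPoint k hAB x = Submodule.Quotient.mk (0, Finsupp.single (.mk ⟨x, hx⟩) 1) := by
  by_cases hxA : x ∈ A
  · rw [pi0MVCokerPoint_of_mem_left k hAB hxA, Submodule.Quotient.eq]
    exact ⟨Finsupp.single (.mk ⟨x, hxA, hx⟩) 1, by simp [pi0AntidiagMap]⟩
  · exact dif_neg hxA

theorem pi0MVCokerPoint_eq_of_joinedIn_left (hAB : A ∪ B = univ) {x y : X} (h : JoinedIn A x y) :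
    pi0MVCokerPoint k hAB x = pi0MVCokerPoint k hAB y := by
  rw [pi0MVCokerPoint_of_mem_left k hAB h.source_mem,
    pi0MVCokerPoint_of_mem_left k hAB h.target_mem, ZerothHomotopy.sound h.joined_subtype.somePath]

theorem pi0MVCokerPoint_eq_of_joinedIn_right (hAB : A ∪ B = univ) {x y : X} (h : JoinedIn B x y) :
    pi0MVCokerPoint k hAB x = pi0MVCokerPoint k hAB y := by
  rw [pi0MVCokerPoint_of_mem_right k hAB h.source_mem,
    pi0MVCokerPoint_of_mem_right k hAB h.target_mem, ZerothHomotopy.sound h.joined_subtype.somePath]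

theorem pi0MVCokerPoint_eq_of_joined (hA : IsOpen A) (hB : IsOpen B) (hAB : A ∪ B = univ)
    {x y : X} (h : Joined x y) : pi0MVCokerPoint k hAB x = pi0MVCokerPoint k hAB y :=
  h.apply_eq_of_locally_joinedIn fun z => by
    rcases (eq_univ_iff_forall.mp hAB z : z ∈ A ∪ B) with hz | hz
    · exact ⟨A, hA.mem_nhds hz, fun _ _ => pi0MVCokerPoint_eq_of_joinedIn_left k hAB⟩
    · exact ⟨B, hB.mem_nhds hz, fun _ _ => pi0MVCokerPoint_eq_of_joinedIn_right k hAB⟩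

noncomputable def pi0MVCokerMap (hA : IsOpen A) (hB : IsOpen B) (hAB : A ∪ B = univ) :
    (ZerothHomotopy X →₀ k) →ₗ[k] Pi0MVCoker k A B :=
  Finsupp.linearCombination k <| ZerothHomotopy.lift (pi0MVCokerPoint k hAB) fun _ _ γ =>
    pi0MVCokerPoint_eq_of_joined k hA hB hAB ⟨γ⟩

theorem pi0MVCokerMap_comp_pi0SumMap (hA : IsOpen A) (hB : IsOpen B) (hAB : A ∪ B = univ) :
    pi0MVCokerMap k hA hB hAB ∘ₗ pi0SumMap k A B =
      (LinearMap.range (pi0AntidiagMap k A B)).mkQ := by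
  ext c : 3
  all_goals induction c with | mk x
  · simp [pi0SumMap, pi0MVCokerMap, pi0MVCokerPoint_of_mem_left k hAB x.2]
  · simp [pi0SumMap, pi0MVCokerMap, pi0MVCokerPoint_of_mem_right k hAB x.2]

theorem ker_pi0SumMap (hA : IsOpen A) (hB : IsOpen B) (hAB : A ∪ B = univ) :
    LinearMap.ker (pi0SumMap k A B) = LinearMap.range (pi0AntidiagMap k A B) := by
  refine le_antisymm ?_ (LinearMap.range_le_ker_iff.mpr (pi0SumMap_comp_pi0AntidiagMap k A B))
  calc LinearMap.ker (pi0SumMap k A B)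
      ≤ LinearMap.ker (pi0MVCokerMap k hA hB hAB ∘ₗ pi0SumMap k A B) :=
        LinearMap.ker_le_ker_comp _ _
    _ = LinearMap.range (pi0AntidiagMap k A B) := by
        rw [pi0MVCokerMap_comp_pi0SumMap, Submodule.ker_mkQ]

end MayerVietoris

/-- Mayer–Vietoris / van Kampen exactness for `H₀` with coefficients in a field
`k`: for open sets `A, B` covering `X`, the sequence
`k[π₀(A ∩ B)] → k[π₀ A] × k[π₀ B] → k[π₀ X] → 0` is exact, where the first map
is `c ↦ (c|_A, −c|_B)` and the second is `(a, b) ↦ a|_X + b|_X`. -/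
theorem pi0_mayer_vietoris_exact
    (k : Type) [Field k]
    (X : Type) [TopologicalSpace X] (A B : Set X)
    (hA : IsOpen A) (hB : IsOpen B) (hAB : A ∪ B = Set.univ) :
    Function.Surjective
      ((pi0LinearMap k ⟨Subtype.val, continuous_subtype_val⟩ :
          (ZerothHomotopy A →₀ k) →ₗ[k] (ZerothHomotopy X →₀ k)).comp
            (LinearMap.fst k (ZerothHomotopy A →₀ k) (ZerothHomotopy B →₀ k)) +
       (pi0LinearMap k ⟨Subtype.val, continuous_subtype_val⟩ :
          (ZerothHomotopy B →₀ k) →ₗ[k] (ZerothHomotopy X →₀ k)).comp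
            (LinearMap.snd k (ZerothHomotopy A →₀ k) (ZerothHomotopy B →₀ k))) ∧
    LinearMap.ker
      ((pi0LinearMap k ⟨Subtype.val, continuous_subtype_val⟩ :
          (ZerothHomotopy A →₀ k) →ₗ[k] (ZerothHomotopy X →₀ k)).comp
            (LinearMap.fst k (ZerothHomotopy A →₀ k) (ZerothHomotopy B →₀ k)) +
       (pi0LinearMap k ⟨Subtype.val, continuous_subtype_val⟩ :
          (ZerothHomotopy B →₀ k) →ₗ[k] (ZerothHomotopy X →₀ k)).comp
            (LinearMap.snd k (ZerothHomotopy A →₀ k) (ZerothHomotopy B →₀ k))) =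
    LinearMap.range
      (LinearMap.prod
        (pi0LinearMap k ⟨Set.inclusion Set.inter_subset_left,
          continuous_inclusion Set.inter_subset_left⟩ :
          (ZerothHomotopy ↥(A ∩ B) →₀ k) →ₗ[k] (ZerothHomotopy A →₀ k))
        (-(pi0LinearMap k ⟨Set.inclusion Set.inter_subset_right,
          continuous_inclusion Set.inter_subset_right⟩ :
          (ZerothHomotopy ↥(A ∩ B) →₀ k) →ₗ[k] (ZerothHomotopy B →₀ k)))) :=
  ⟨pi0SumMap_surjective k A B hAB, ker_pi0SumMap k hA hB hAB⟩
end

section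
/- Tarski–Seidenberg theorem: the image of a semialgebraic set under a coordinate projection is semialgebraic. Precisely: let n ≥ 0 and let A ⊆ ℝ^{n+1} be a semialgebraic set, i.e., a finite union of finite intersections of sets of the form {x ∈ ℝ^{n+1} : p(x) = 0} or {x ∈ ℝ^{n+1} : p(x) > 0} where p is a real polynomial in n+1 variables. Let π : ℝ^{n+1} → ℝⁿ be the projection onto the first n coordinates. Then π(A) is a semialgebraic subset of ℝⁿ, i.e., a finite union of finite intersections of sets of the form {x ∈ ℝⁿ : q(x) = 0} or {x ∈ ℝⁿ : q(x) > 0} for real polynomials q in n variables. -/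
/-- A subset of `ℝⁿ` is semialgebraic if it is a finite union of finite
intersections of sets of the form `{x : p x = 0}` or `{x : p x > 0}` for real
polynomials `p` in `n` variables. -/
def IsSemialgebraic {n : ℕ} (S : Set (Fin n → ℝ)) : Prop :=
  ∃ (p q : ℕ) (f : Fin p → Fin q → MvPolynomial (Fin n) ℝ)
    (c : Fin p → Fin q → Bool),
    S = ⋃ i : Fin p, ⋂ j : Fin q,
      {x : Fin n → ℝ |
        if c i j then MvPolynomial.eval x (f i j) = 0
        else 0 < MvPolynomial.eval x (f i j)}

/-!
Cohen–Hörmander elimination. For a finite family `F` of polynomials in `t` with coefficients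
polynomial in `x`, a sign table of `F(x)` (the sign vectors on the successive intervals and points
of a partition of the line) can be chosen as a function of `x` with finitely many values, each
taken on a semialgebraic set. The projection of `{(x, t) | the signs of F(x, t) are σ}` is then the
set of `x` whose table contains `σ`.

The table is built by well-founded induction on the multiset of degrees. Where a leading
coefficient vanishes, that term is dropped. Otherwise take `p` of maximal degree and replace it by
`p'` and the pseudo-remainders of `p` modulo `p'` and the other members: at a root of a nonzero
divisor, `p` has the sign of the corresponding remainder, and between consecutive such roots `p`
is monotone, so it has at most one root there and its signs are determined by those at the ends.
-/

open Set

section Semialgebraic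

open MvPolynomial

variable {n : ℕ}

theorem isSemialgebraic_iUnion_iInter {ι κ : Type*} [Finite ι] [Finite κ]
    (f : ι → κ → MvPolynomial (Fin n) ℝ) (c : ι → κ → Bool) :
    IsSemialgebraic (⋃ i, ⋂ j,
      {x : Fin n → ℝ | if c i j then eval x (f i j) = 0 else 0 < eval x (f i j)}) := by
  obtain ⟨p, ⟨e⟩⟩ := Finite.exists_equiv_fin ι
  obtain ⟨q, ⟨e'⟩⟩ := Finite.exists_equiv_fin κ
  refine ⟨p, q, fun i j => f (e.symm i) (e'.symm j), fun i j => c (e.symm i) (e'.symm j), ?_⟩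
  ext x
  simp only [mem_iUnion, mem_iInter, mem_ofPred_eq]
  exact e.exists_congr_left.trans (exists_congr fun i => e'.forall_congr_left)

theorem IsSemialgebraic.union {S T : Set (Fin n → ℝ)} (hS : IsSemialgebraic S)
    (hT : IsSemialgebraic T) : IsSemialgebraic (S ∪ T) := by
  obtain ⟨p, q, f, c, rfl⟩ := hS
  obtain ⟨p', q', f', c', rfl⟩ := hT
  convert isSemialgebraic_iUnion_iInter (ι := Fin p ⊕ Fin p') (κ := Fin q ⊕ Fin q')
    (Sum.elim (fun i => Sum.elim (f i) 0) fun i => Sum.elim 0 (f' i))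
    (Sum.elim (fun i => Sum.elim (c i) fun _ => true) fun i => Sum.elim (fun _ => true) (c' i))
    using 1
  ext x
  simp only [mem_union, mem_iUnion, mem_iInter, mem_ofPred_eq, Sum.forall, Sum.exists,
    Sum.elim_inl, Sum.elim_inr, ↓reduceIte, Pi.zero_apply, map_zero, implies_true, and_true,
    true_and]
  exact Iff.rfl

theorem IsSemialgebraic.inter {S T : Set (Fin n → ℝ)} (hS : IsSemialgebraic S)
    (hT : IsSemialgebraic T) : IsSemialgebraic (S ∩ T) := by
  obtain ⟨p, q, f, c, rfl⟩ := hS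
  obtain ⟨p', q', f', c', rfl⟩ := hT
  convert isSemialgebraic_iUnion_iInter (ι := Fin p × Fin p') (κ := Fin q ⊕ Fin q')
    (fun i => Sum.elim (f i.1) (f' i.2)) (fun i => Sum.elim (c i.1) (c' i.2)) using 1
  ext x
  simp only [mem_inter_iff, mem_iUnion, mem_iInter, mem_ofPred_eq, Sum.forall, Sum.elim_inl,
    Sum.elim_inr, Prod.exists]
  exact exists_and_exists_comm

theorem isSemialgebraic_empty : IsSemialgebraic (∅ : Set (Fin n → ℝ)) :=
  ⟨0, 0, finZeroElim, finZeroElim, by simp⟩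

theorem isSemialgebraic_univ : IsSemialgebraic (univ : Set (Fin n → ℝ)) :=
  ⟨1, 0, fun _ => finZeroElim, fun _ => finZeroElim, by simp [iUnion_const]⟩

theorem IsSemialgebraic.iUnion {ι : Type*} [Finite ι] {S : ι → Set (Fin n → ℝ)}
    (hS : ∀ i, IsSemialgebraic (S i)) : IsSemialgebraic (⋃ i, S i) := by
  induction ι using Finite.induction_empty_option with
  | of_equiv e ih => simpa [← e.surjective.iUnion_comp] using ih fun i => hS (e i)
  | h_empty => simpa using isSemialgebraic_empty
  | h_option ih => simpa [iUnion_option] using (hS none).union (ih fun i => hS (some i))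

theorem IsSemialgebraic.iInter {ι : Type*} [Finite ι] {S : ι → Set (Fin n → ℝ)}
    (hS : ∀ i, IsSemialgebraic (S i)) : IsSemialgebraic (⋂ i, S i) := by
  induction ι using Finite.induction_empty_option with
  | of_equiv e ih => simpa [← e.surjective.iInter_comp] using ih fun i => hS (e i)
  | h_empty => simpa using isSemialgebraic_univ
  | h_option ih => simpa [iInter_option] using (hS none).inter (ih fun i => hS (some i))

theorem IsSemialgebraic.biUnion {α : Type*} {s : Set α} (hs : s.Finite)
    {S : α → Set (Fin n → ℝ)} (hS : ∀ a ∈ s, IsSemialgebraic (S a)) :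
    IsSemialgebraic (⋃ a ∈ s, S a) := by
  have := hs.to_subtype
  rw [biUnion_eq_iUnion]
  exact IsSemialgebraic.iUnion fun a : s => hS a a.2

theorem isSemialgebraic_setOf_eval_eq_zero (p : MvPolynomial (Fin n) ℝ) :
    IsSemialgebraic {x | eval x p = 0} :=
  ⟨1, 1, fun _ _ => p, fun _ _ => true, by simp [iUnion_const, iInter_const]⟩

theorem isSemialgebraic_setOf_eval_pos (p : MvPolynomial (Fin n) ℝ) :
    IsSemialgebraic {x | 0 < eval x p} :=
  ⟨1, 1, fun _ _ => p, fun _ _ => false, by simp [iUnion_const, iInter_const]⟩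

theorem isSemialgebraic_setOf_sign_eval_eq (p : MvPolynomial (Fin n) ℝ) (s : SignType) :
    IsSemialgebraic {x | SignType.sign (eval x p) = s} := by
  cases s
  · simpa using isSemialgebraic_setOf_eval_eq_zero p
  · simpa [sign_eq_neg_one_iff] using isSemialgebraic_setOf_eval_pos (-p)
  · simpa [sign_eq_one_iff] using isSemialgebraic_setOf_eval_pos p

end Semialgebraic

section SimpleFunc

open MvPolynomial

variable {n : ℕ} {α β γ ι : Type*}

def IsSemialgebraicSimpleFunc (τ : (Fin n → ℝ) → β) : Prop :=
  (range τ).Finite ∧ ∀ b, IsSemialgebraic (τ ⁻¹' {b})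

namespace IsSemialgebraicSimpleFunc

variable {τ : (Fin n → ℝ) → β}

theorem preimage (hτ : IsSemialgebraicSimpleFunc τ) (s : Set β) :
    IsSemialgebraic (τ ⁻¹' s) := by
  have hs : τ ⁻¹' s = ⋃ b ∈ range τ ∩ s, τ ⁻¹' {b} := by ext x; simp
  rw [hs]
  exact .biUnion (hτ.1.inter_of_left s) fun b _ => hτ.2 b

theorem comp (hτ : IsSemialgebraicSimpleFunc τ) (φ : β → γ) :
    IsSemialgebraicSimpleFunc (φ ∘ τ) :=
  ⟨range_comp φ τ ▸ hτ.1.image φ, fun c => hτ.preimage (φ ⁻¹' {c})⟩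

theorem prodMk {τ' : (Fin n → ℝ) → γ} (hτ : IsSemialgebraicSimpleFunc τ)
    (hτ' : IsSemialgebraicSimpleFunc τ') : IsSemialgebraicSimpleFunc fun x => (τ x, τ' x) := by
  refine ⟨(hτ.1.prod hτ'.1).subset ?_, fun bc => ?_⟩
  · rintro _ ⟨x, rfl⟩
    exact ⟨mem_range_self x, mem_range_self x⟩
  · convert (hτ.2 bc.1).inter (hτ'.2 bc.2) using 1
    ext x
    simp [Prod.ext_iff]

theorem pi [Finite ι] {τ : ι → (Fin n → ℝ) → β} (hτ : ∀ i, IsSemialgebraicSimpleFunc (τ i)) :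
    IsSemialgebraicSimpleFunc fun x i => τ i x := by
  refine ⟨(Set.Finite.pi fun i => (hτ i).1).subset ?_, fun σ => ?_⟩
  · rintro _ ⟨x, rfl⟩ i -
    exact mem_range_self x
  · convert IsSemialgebraic.iInter fun i => (hτ i).2 (σ i) using 1
    ext x
    simp [funext_iff]

theorem bind {κ : (Fin n → ℝ) → α} (hκ : IsSemialgebraicSimpleFunc κ)
    {τ : α → (Fin n → ℝ) → β} (hτ : ∀ a, IsSemialgebraicSimpleFunc (τ a)) :
    IsSemialgebraicSimpleFunc fun x => τ (κ x) x := by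
  refine ⟨(hκ.1.biUnion fun a _ => (hτ a).1).subset ?_, fun b => ?_⟩
  · rintro _ ⟨x, rfl⟩
    exact mem_biUnion (mem_range_self x) (mem_range_self x)
  · have hfib : (fun x => τ (κ x) x) ⁻¹' {b} = ⋃ a ∈ range κ, κ ⁻¹' {a} ∩ τ a ⁻¹' {b} := by
      ext x
      simpa using ⟨fun h => ⟨x, rfl, h⟩, fun ⟨y, hy, h⟩ => hy ▸ h⟩
    rw [hfib]
    exact .biUnion hκ.1 fun a _ => (hκ.2 a).inter ((hτ a).2 b)

end IsSemialgebraicSimpleFunc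

theorem isSemialgebraicSimpleFunc_sign_eval (p : MvPolynomial (Fin n) ℝ) :
    IsSemialgebraicSimpleFunc fun x : Fin n → ℝ => SignType.sign (eval x p) :=
  ⟨toFinite _, isSemialgebraic_setOf_sign_eval_eq p⟩

end SimpleFunc

section RealPolynomial

open Polynomial Filter Topology

theorem SignType.eq_neg_one_or_eq_one {s : SignType} (hs : s ≠ 0) : s = -1 ∨ s = 1 := by
  cases s <;> simp_all

def IsSignRun (f : ℝ → ℝ) (lo hi : EReal) (lL rL : SignType) : Prop :=
  (lL = rL → ∀ s : ℝ, lo < s → s < hi → SignType.sign (f s) = lL) ∧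
  (lL ≠ rL → ∃ v : ℝ, lo < v ∧ v < hi ∧ f v = 0 ∧
    (∀ s : ℝ, lo < s → s < v → SignType.sign (f s) = lL) ∧
    (∀ s : ℝ, v < s → s < hi → SignType.sign (f s) = rL))

variable {lo hi : EReal}

theorem isSignRun_of_forall_lt {f : ℝ → ℝ} (hf : Continuous f)
    (hmono : ∀ a b : ℝ, lo < a → a < b → b < hi → f a < f b) {lL rL : SignType}
    (hlL : lL ≠ 0) (hrL : rL ≠ 0)
    (hL : ∃ a : ℝ, lo < a ∧ a < hi ∧ ∀ s : ℝ, lo < s → s < a → SignType.sign (f s) = lL)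
    (hR : ∃ b : ℝ, lo < b ∧ b < hi ∧ ∀ s : ℝ, b < s → s < hi → SignType.sign (f s) = rL) :
    IsSignRun f lo hi lL rL := by
  obtain ⟨a, hloa, hahi, hL⟩ := hL
  obtain ⟨b, hlob, hbhi, hR⟩ := hR
  have below (s : ℝ) (hs : lo < s) : ∃ t : ℝ, lo < t ∧ t < s ∧ SignType.sign (f t) = lL := by
    have hmin : lo < ((min s a : ℝ) : EReal) := by
      rcases min_choice s a with h | h <;> rw [h] <;> assumption
    obtain ⟨t, hlot, hts⟩ := EReal.lt_iff_exists_real_btwn.1 hmin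
    rw [EReal.coe_lt_coe_iff] at hts
    exact ⟨t, hlot, hts.trans_le (min_le_left _ _), hL t hlot (hts.trans_le (min_le_right _ _))⟩
  have above (s : ℝ) (hs : s < hi) : ∃ t : ℝ, s < t ∧ t < hi ∧ SignType.sign (f t) = rL := by
    have hmax : ((max s b : ℝ) : EReal) < hi := by
      rcases max_choice s b with h | h <;> rw [h] <;> assumption
    obtain ⟨t, hst, hthi⟩ := EReal.lt_iff_exists_real_btwn.1 hmax
    rw [EReal.coe_lt_coe_iff] at hst
    exact ⟨t, (le_max_left _ _).trans_lt hst, hthi, hR t ((le_max_right _ _).trans_lt hst) hthi⟩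
  constructor
  · rintro rfl s hlos hshi
    obtain ⟨t, hlot, hts, ht⟩ := below s hlos
    obtain ⟨t', hst', ht'hi, ht'⟩ := above s hshi
    have h₁ := hmono t s hlot hts hshi
    have h₂ := hmono s t' hlos hst' ht'hi
    rcases SignType.eq_neg_one_or_eq_one hlL with rfl | rfl
    · exact sign_eq_neg_one_iff.2 (h₂.trans (sign_eq_neg_one_iff.1 ht'))
    · exact sign_eq_one_iff.2 ((sign_eq_one_iff.1 ht).trans h₁)
  · intro hne
    obtain ⟨t, hlot, hta, ht⟩ := below a hloa
    obtain ⟨t', hat', ht'hi, ht'⟩ := above a hahi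
    have htt' : t < t' := hta.trans hat'
    have hlt := hmono t t' hlot htt' ht'hi
    have hsigns : lL = -1 ∧ rL = 1 := by
      rcases SignType.eq_neg_one_or_eq_one hlL with rfl | rfl
      · refine ⟨rfl, (SignType.eq_neg_one_or_eq_one hrL).resolve_left hne.symm⟩
      · have := (sign_eq_one_iff.1 ht).trans hlt
        exact absurd (ht'.symm.trans (sign_eq_one_iff.2 this)) hne.symm
    obtain ⟨rfl, rfl⟩ := hsigns
    obtain ⟨v, ⟨htv, hvt'⟩, hv⟩ := intermediate_value_Ioo htt'.le hf.continuousOn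
      ⟨sign_eq_neg_one_iff.1 ht, sign_eq_one_iff.1 ht'⟩
    have hlov : lo < v := hlot.trans (EReal.coe_lt_coe_iff.2 htv)
    have hvhi : (v : EReal) < hi := (EReal.coe_lt_coe_iff.2 hvt').trans ht'hi
    refine ⟨v, hlov, hvhi, hv, fun s hlos hsv => ?_, fun s hvs hshi => ?_⟩
    · exact sign_eq_neg_one_iff.2 (hv ▸ hmono s v hlos hsv hvhi)
    · exact sign_eq_one_iff.2 (hv ▸ hmono v s hlov hvs hshi)

theorem isSignRun_of_forall_sign_sub {f : ℝ → ℝ} (hf : Continuous f) {ε' : SignType} (hε' : ε' ≠ 0)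
    (hmono : ∀ a b : ℝ, lo < a → a < b → b < hi → SignType.sign (f b - f a) = ε')
    {lL rL : SignType} (hlL : lL ≠ 0) (hrL : rL ≠ 0)
    (hL : ∃ a : ℝ, lo < a ∧ a < hi ∧ ∀ s : ℝ, lo < s → s < a → SignType.sign (f s) = lL)
    (hR : ∃ b : ℝ, lo < b ∧ b < hi ∧ ∀ s : ℝ, b < s → s < hi → SignType.sign (f s) = rL) :
    IsSignRun f lo hi lL rL := by
  rcases SignType.eq_neg_one_or_eq_one hε' with rfl | rfl
  · have hneg := isSignRun_of_forall_lt (f := fun s => -f s) (lL := -lL) (rL := -rL) hf.neg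
      (fun a b ha hab hb => neg_lt_neg (sub_neg.1 (sign_eq_neg_one_iff.1 (hmono a b ha hab hb))))
      (mt SignType.neg_eq_zero_iff.1 hlL) (mt SignType.neg_eq_zero_iff.1 hrL)
      (by simpa [Left.sign_neg] using hL) (by simpa [Left.sign_neg] using hR)
    simpa [IsSignRun, Left.sign_neg] using hneg
  · exact isSignRun_of_forall_lt hf
      (fun a b ha hab hb => sub_pos.1 (sign_eq_one_iff.1 (hmono a b ha hab hb))) hlL hrL hL hR

theorem sign_eval_sub_eval_of_sign_derivative {p : ℝ[X]} {ε' : SignType} (hε' : ε' ≠ 0)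
    {a b : ℝ} (hab : a < b) (h : ∀ s ∈ Ioo a b, SignType.sign ((derivative p).eval s) = ε') :
    SignType.sign (p.eval b - p.eval a) = ε' := by
  have hab' := left_mem_Icc.2 hab.le
  have hba' := right_mem_Icc.2 hab.le
  rcases SignType.eq_neg_one_or_eq_one hε' with rfl | rfl
  · refine sign_eq_neg_one_iff.2 (sub_neg.2 ?_)
    exact strictAntiOn_of_deriv_neg (convex_Icc a b) p.continuousOn
      (by simpa [interior_Icc, sign_eq_neg_one_iff] using h) hab' hba' hab
  · refine sign_eq_one_iff.2 (sub_pos.2 ?_)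
    exact strictMonoOn_of_deriv_pos (convex_Icc a b) p.continuousOn
      (by simpa [interior_Icc, sign_eq_one_iff] using h) hab' hba' hab

end RealPolynomial

section RealPolynomialEnds

open Polynomial Filter Topology

variable {lo hi : EReal}

/-- The sign of `p` at a point of `[-∞, ∞]`, the values at `±∞` being the eventual signs. -/
noncomputable def signAt (p : ℝ[X]) : EReal → SignType :=
  EReal.rec (SignType.sign p.leadingCoeff * (-1) ^ p.natDegree) (fun a => SignType.sign (p.eval a))
    (SignType.sign p.leadingCoeff)

/-- The sign of `p` just after a point where `p` has sign `sp` and `p'` has sign `ε'`. -/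
def signAfter (sp ε' : SignType) : SignType := if sp = 0 then ε' else sp

/-- The sign of `p` just before a point where `p` has sign `sp` and `p'` has sign `ε'`. -/
def signBefore (sp ε' : SignType) : SignType := if sp = 0 then -ε' else sp

theorem signAfter_ne_zero {ε' : SignType} (hε' : ε' ≠ 0) (sp : SignType) :
    signAfter sp ε' ≠ 0 := by
  unfold signAfter; split_ifs <;> assumption

theorem signBefore_ne_zero {ε' : SignType} (hε' : ε' ≠ 0) (sp : SignType) :
    signBefore sp ε' ≠ 0 := by
  unfold signBefore; split_ifs with h
  · cases ε' <;> simp_all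
  · exact h

theorem signAt_bot_ne_zero {p : ℝ[X]} (hp : p ≠ 0) : signAt p ⊥ ≠ 0 := by
  simp [signAt, hp]

theorem signAt_top_ne_zero {p : ℝ[X]} (hp : p ≠ 0) : signAt p ⊤ ≠ 0 := by
  simp [signAt, hp]

theorem eventually_sign_eval_atTop (p : ℝ[X]) :
    ∀ᶠ s in atTop, SignType.sign (p.eval s) = signAt p ⊤ := by
  obtain ⟨φ, hφ, heq⟩ := p.isEquivalent_atTop_lead.exists_pos_eq_mul
  filter_upwards [hφ, heq, eventually_gt_atTop 0] with s hφs hs hs0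
  rw [hs, Pi.mul_apply, sign_mul, sign_mul, sign_pos hφs, sign_pos (pow_pos hs0 _)]
  simp [signAt]

theorem eventually_sign_eval_atBot (p : ℝ[X]) :
    ∀ᶠ s in atBot, SignType.sign (p.eval s) = signAt p ⊥ := by
  obtain ⟨φ, hφ, heq⟩ := p.isEquivalent_atBot_lead.exists_pos_eq_mul
  filter_upwards [hφ, heq, eventually_lt_atBot 0] with s hφs hs hs0
  rw [hs, Pi.mul_apply, sign_mul, sign_mul, sign_pos hφs, sign_pow, sign_neg hs0]
  simp [signAt]

theorem eventually_sign_eval_nhds {p : ℝ[X]} {a : ℝ} (ha : p.eval a ≠ 0) :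
    ∀ᶠ s in 𝓝 a, SignType.sign (p.eval s) = SignType.sign (p.eval a) :=
  ((continuousAt_sign_of_ne_zero ha).comp (f := fun s => p.eval s)
    p.continuous.continuousAt).eventually_mem
    ((isOpen_discrete {_}).mem_nhds rfl)

theorem exists_sign_eval_eq_signAfter {p : ℝ[X]} (hp : p ≠ 0) {ε' : SignType} (hε' : ε' ≠ 0)
    (hlohi : lo < hi)
    (hder : ∀ s : ℝ, lo < s → s < hi → SignType.sign ((derivative p).eval s) = ε') :
    ∃ a : ℝ, lo < a ∧ a < hi ∧
      ∀ s : ℝ, lo < s → s < a → SignType.sign (p.eval s) = signAfter (signAt p lo) ε' := by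
  obtain ⟨t, hlot, hthi⟩ := EReal.lt_iff_exists_real_btwn.1 hlohi
  cases lo with
  | bot =>
    obtain ⟨A, hA⟩ := eventually_atBot.1 (eventually_sign_eval_atBot p)
    refine ⟨min A t, EReal.bot_lt_coe _, (EReal.coe_le_coe_iff.2 (min_le_right _ _)).trans_lt hthi,
      fun s _ hs => ?_⟩
    rw [signAfter, if_neg (signAt_bot_ne_zero hp)]
    exact hA s (hs.le.trans (min_le_left _ _))
  | top => exact absurd hlohi not_top_lt
  | coe a =>
    by_cases ha : p.eval a = 0
    · refine ⟨t, hlot, hthi, fun s has hst => ?_⟩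
      have := sign_eval_sub_eval_of_sign_derivative hε' (EReal.coe_lt_coe_iff.1 has) fun r hr =>
        hder r (EReal.coe_lt_coe_iff.2 hr.1) ((EReal.coe_lt_coe_iff.2 (hr.2.trans hst)).trans hthi)
      simpa [signAt, signAfter, ha] using this
    · obtain ⟨l, u, ⟨hl, hu⟩, hsub⟩ := (eventually_sign_eval_nhds ha).exists_Ioo_subset
      refine ⟨min u t, EReal.coe_lt_coe_iff.2 (lt_min hu (EReal.coe_lt_coe_iff.1 hlot)),
        (EReal.coe_le_coe_iff.2 (min_le_right _ _)).trans_lt hthi, fun s has hs => ?_⟩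
      simpa [signAt, signAfter, ha] using
        hsub ⟨hl.trans (EReal.coe_lt_coe_iff.1 has), hs.trans_le (min_le_left _ _)⟩

theorem exists_sign_eval_eq_signBefore {p : ℝ[X]} (hp : p ≠ 0) {ε' : SignType} (hε' : ε' ≠ 0)
    (hlohi : lo < hi)
    (hder : ∀ s : ℝ, lo < s → s < hi → SignType.sign ((derivative p).eval s) = ε') :
    ∃ b : ℝ, lo < b ∧ b < hi ∧
      ∀ s : ℝ, b < s → s < hi → SignType.sign (p.eval s) = signBefore (signAt p hi) ε' := by
  obtain ⟨t, hlot, hthi⟩ := EReal.lt_iff_exists_real_btwn.1 hlohi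
  cases hi with
  | bot => exact absurd hlohi not_lt_bot
  | top =>
    obtain ⟨B, hB⟩ := eventually_atTop.1 (eventually_sign_eval_atTop p)
    refine ⟨max B t, hlot.trans_le (EReal.coe_le_coe_iff.2 (le_max_right _ _)), EReal.coe_lt_top _,
      fun s hs _ => ?_⟩
    rw [signBefore, if_neg (signAt_top_ne_zero hp)]
    exact hB s ((le_max_left _ _).trans hs.le)
  | coe b =>
    by_cases hb : p.eval b = 0
    · refine ⟨t, hlot, hthi, fun s hts hsb => ?_⟩
      have := sign_eval_sub_eval_of_sign_derivative hε' (EReal.coe_lt_coe_iff.1 hsb) fun r hr =>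
        hder r (hlot.trans (EReal.coe_lt_coe_iff.2 (hts.trans hr.1))) (EReal.coe_lt_coe_iff.2 hr.2)
      simp only [hb, zero_sub, Left.sign_neg] at this
      simp [signAt, signBefore, hb, ← this]
    · obtain ⟨l, u, ⟨hl, hu⟩, hsub⟩ := (eventually_sign_eval_nhds hb).exists_Ioo_subset
      refine ⟨max l t, hlot.trans_le (EReal.coe_le_coe_iff.2 (le_max_right _ _)),
        EReal.coe_lt_coe_iff.2 (max_lt hl (EReal.coe_lt_coe_iff.1 hthi)), fun s hs hsb => ?_⟩
      simpa [signAt, signBefore, hb] using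
        hsub ⟨(le_max_left _ _).trans_lt hs, (EReal.coe_lt_coe_iff.1 hsb).trans hu⟩

theorem ne_zero_of_forall_sign_eval_eq {q : ℝ[X]} (hq : q ≠ 0) (hlohi : lo < hi) {c : SignType}
    (h : ∀ s : ℝ, lo < s → s < hi → SignType.sign (q.eval s) = c) : c ≠ 0 := by
  rintro rfl
  obtain ⟨t, hlot, hthi⟩ := EReal.lt_iff_exists_real_btwn.1 hlohi
  obtain ⟨t', htt', ht'hi⟩ := EReal.lt_iff_exists_real_btwn.1 hthi
  refine hq (eq_zero_of_infinite_isRoot q ((Ioo_infinite (EReal.coe_lt_coe_iff.1 htt')).mono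
    fun s hs => ?_))
  exact sign_eq_zero_iff.1
    (h s (hlot.trans (EReal.coe_lt_coe_iff.2 hs.1)) ((EReal.coe_lt_coe_iff.2 hs.2).trans ht'hi))

theorem isSignRun_of_sign_derivative {p : ℝ[X]} (hp : p ≠ 0) {ε' : SignType} (hε' : ε' ≠ 0)
    (hlohi : lo < hi)
    (hder : ∀ s : ℝ, lo < s → s < hi → SignType.sign ((derivative p).eval s) = ε') :
    IsSignRun p.eval lo hi (signAfter (signAt p lo) ε') (signBefore (signAt p hi) ε') :=
  isSignRun_of_forall_sign_sub p.continuous hε'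
    (fun _ _ ha hab hb => sign_eval_sub_eval_of_sign_derivative hε' hab fun s hs =>
      hder s (ha.trans (EReal.coe_lt_coe_iff.2 hs.1)) ((EReal.coe_lt_coe_iff.2 hs.2).trans hb))
    (signAfter_ne_zero hε' _) (signBefore_ne_zero hε' _)
    (exists_sign_eval_eq_signAfter hp hε' hlohi hder)
    (exists_sign_eval_eq_signBefore hp hε' hlohi hder)

end RealPolynomialEnds

section SignTable

open Polynomial Topology

variable {α α' β ι : Type*}

noncomputable def signVec (f : α → ℝ[X]) (s : ℝ) : α → SignType :=
  fun a => SignType.sign ((f a).eval s)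

/-- `RealizesFrom f g lo L ρ`: the entries `(σ, τ)` of `L` describe consecutive points
`lo < u₁ < u₂ < ⋯`, with `f` having signs `σ` on the interval before the point and `g` having
signs `τ` at it; `f` has signs `ρ` after the last point. -/
def RealizesFrom (f : α → ℝ[X]) (g : β → ℝ[X]) :
    EReal → List ((α → SignType) × (β → SignType)) → (α → SignType) → Prop
  | lo, [], ρ => ∀ s : ℝ, lo < s → signVec f s = ρ
  | lo, (σ, τ) :: L, ρ => ∃ u : ℝ, lo < u ∧ (∀ s : ℝ, lo < s → s < u → signVec f s = σ) ∧
      signVec g u = τ ∧ RealizesFrom f g u L ρ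

abbrev SignTable (ι : Type*) := List ((ι → SignType) × (ι → SignType)) × (ι → SignType)

def SignTable.vectors (T : SignTable ι) : List (ι → SignType) :=
  T.1.flatMap (fun c => [c.1, c.2]) ++ [T.2]

def IsSignTable (g : ι → ℝ[X]) (T : SignTable ι) : Prop :=
  RealizesFrom g g ⊥ T.1 T.2

theorem RealizesFrom.exists_signVec_eq_iff {g : ι → ℝ[X]} (σ : ι → SignType) :
    ∀ {lo : EReal} {L : List ((ι → SignType) × (ι → SignType))} {ρ : ι → SignType},
      lo < ⊤ → RealizesFrom g g lo L ρ →
        ((∃ s : ℝ, lo < s ∧ signVec g s = σ) ↔ σ ∈ SignTable.vectors (L, ρ))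
  | lo, [], ρ, hlo, h => by
    obtain ⟨t, hlot, -⟩ := EReal.lt_iff_exists_real_btwn.1 hlo
    simpa [SignTable.vectors] using
      ⟨fun ⟨s, hs, hσ⟩ => hσ ▸ h s hs, fun hσ => ⟨t, hlot, hσ ▸ h t hlot⟩⟩
  | lo, (σ₀, τ₀) :: L, ρ, hlo, ⟨u, hlou, hσ₀, hτ₀, hL⟩ => by
    have ih := exists_signVec_eq_iff σ (EReal.coe_lt_top u) hL
    simp only [SignTable.vectors, List.flatMap_cons, List.cons_append, List.mem_cons,
      List.nil_append] at ih ⊢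
    rw [← ih]
    constructor
    · rintro ⟨s, hlos, rfl⟩
      rcases lt_trichotomy s u with hsu | rfl | hus
      · exact Or.inl (hσ₀ s hlos hsu)
      · exact Or.inr (Or.inl hτ₀)
      · exact Or.inr (Or.inr ⟨s, EReal.coe_lt_coe_iff.2 hus, rfl⟩)
    · rintro (rfl | rfl | ⟨s, hus, rfl⟩)
      · obtain ⟨t, hlot, htu⟩ := EReal.lt_iff_exists_real_btwn.1 hlou
        exact ⟨t, hlot, hσ₀ t hlot (EReal.coe_lt_coe_iff.1 htu)⟩
      · exact ⟨u, hlou, hτ₀⟩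
      · exact ⟨s, hlou.trans hus, rfl⟩

theorem IsSignTable.exists_signVec_eq_iff {g : ι → ℝ[X]} {T : SignTable ι} (h : IsSignTable g T)
    (σ : ι → SignType) : (∃ s : ℝ, signVec g s = σ) ↔ σ ∈ T.vectors := by
  simpa using RealizesFrom.exists_signVec_eq_iff σ bot_lt_top h

theorem RealizesFrom.comp_left {f : α → ℝ[X]} {g : β → ℝ[X]} (e : α' → α) :
    ∀ {lo : EReal} {L : List ((α → SignType) × (β → SignType))} {ρ : α → SignType},
      RealizesFrom f g lo L ρ →
        RealizesFrom (f ∘ e) g lo (L.map (Prod.map (· ∘ e) id)) (ρ ∘ e)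
  | lo, [], ρ, h => fun s hs => by rw [← h s hs]; rfl
  | lo, (σ, τ) :: L, ρ, ⟨u, hlou, hσ, hτ, hL⟩ =>
    ⟨u, hlou, fun s hs hsu => by rw [← hσ s hs hsu]; rfl, hτ, hL.comp_left e⟩

theorem eq_signVec_of_eval_ne_zero {f : α → ℝ[X]} {lo hi : EReal} {u : ℝ} (hlou : lo < u)
    (huhi : u < hi)
    {σ σ' : α → SignType} (hσ : ∀ s : ℝ, lo < s → s < u → signVec f s = σ)
    (hσ' : ∀ s : ℝ, u < s → s < hi → signVec f s = σ')
    (hu : ∀ a, f a = 0 ∨ (f a).eval u ≠ 0) : σ = signVec f u ∧ σ' = signVec f u := by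
  simp only [funext_iff, ← forall_and]
  intro a
  rcases hu a with h0 | hne
  · obtain ⟨t, hlot, htu⟩ := EReal.lt_iff_exists_real_btwn.1 hlou
    obtain ⟨t', hut', ht'hi⟩ := EReal.lt_iff_exists_real_btwn.1 huhi
    rw [← congrFun (hσ t hlot (EReal.coe_lt_coe_iff.1 htu)) a,
      ← congrFun (hσ' t' (EReal.coe_lt_coe_iff.1 hut') ht'hi) a]
    simp [signVec, h0]
  · obtain ⟨l, r, ⟨hl, hr⟩, hsub⟩ := (eventually_sign_eval_nhds hne).exists_Ioo_subset
    obtain ⟨t, hlot, htu⟩ :=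
      EReal.lt_iff_exists_real_btwn.1 (max_lt hlou (EReal.coe_lt_coe_iff.2 hl))
    obtain ⟨t', hut', ht'hi⟩ :=
      EReal.lt_iff_exists_real_btwn.1 (lt_min huhi (EReal.coe_lt_coe_iff.2 hr))
    rw [max_lt_iff, EReal.coe_lt_coe_iff] at hlot
    rw [lt_min_iff, EReal.coe_lt_coe_iff] at ht'hi
    rw [← congrFun (hσ t hlot.1 (EReal.coe_lt_coe_iff.1 htu)) a,
      ← congrFun (hσ' t' (EReal.coe_lt_coe_iff.1 hut') ht'hi.1) a]
    exact ⟨hsub ⟨hlot.2, (EReal.coe_lt_coe_iff.1 htu).trans hr⟩,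
      hsub ⟨hl.trans (EReal.coe_lt_coe_iff.1 hut'), ht'hi.2⟩⟩

theorem RealizesFrom.extend_left {f : α → ℝ[X]} {g : β → ℝ[X]} {lo : EReal} {u : ℝ}
    (hlou : lo < u) {σ : α → SignType} (hσ : ∀ s : ℝ, lo < s → s < u → signVec f s = σ)
    (hu : ∀ a, f a = 0 ∨ (f a).eval u ≠ 0) :
    ∀ {L : List ((α → SignType) × (β → SignType))} {ρ : α → SignType},
      RealizesFrom f g u L ρ → RealizesFrom f g lo L ρ
  | [], ρ, h => by
    obtain ⟨h₁, h₂⟩ := eq_signVec_of_eval_ne_zero hlou (EReal.coe_lt_top u) hσ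
      (fun s hs _ => h s (EReal.coe_lt_coe_iff.2 hs)) hu
    intro s hlos
    rcases lt_trichotomy s u with hsu | rfl | hus
    · rw [hσ s hlos hsu, h₁, h₂]
    · rw [h₂]
    · exact h s (EReal.coe_lt_coe_iff.2 hus)
  | (σ', τ') :: L, ρ, ⟨u', huu', hσ', hτ', hL⟩ => by
    obtain ⟨h₁, h₂⟩ := eq_signVec_of_eval_ne_zero hlou huu' hσ (fun s hs hsu' =>
      hσ' s (EReal.coe_lt_coe_iff.2 hs) (EReal.coe_lt_coe_iff.1 hsu')) hu
    refine ⟨u', hlou.trans huu', fun s hlos hsu' => ?_, hτ', hL⟩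
    rcases lt_trichotomy s u with hsu | rfl | hus
    · rw [hσ s hlos hsu, h₁, h₂]
    · rw [h₂]
    · exact hσ' s (EReal.coe_lt_coe_iff.2 hus) hsu'

theorem RealizesFrom.filter {f : α → ℝ[X]} {g : β → ℝ[X]} {e : α → β} (he : ∀ a, g (e a) = f a)
    (P : (β → SignType) → Prop) [DecidablePred P]
    (hP : ∀ τ, ¬ P τ → ∀ a, f a = 0 ∨ τ (e a) ≠ 0) :
    ∀ {lo : EReal} {L : List ((α → SignType) × (β → SignType))} {ρ : α → SignType},
      RealizesFrom f g lo L ρ → RealizesFrom f g lo (L.filter fun c => P c.2) ρ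
  | lo, [], ρ, h => h
  | lo, (σ, τ) :: L, ρ, ⟨u, hlou, hσ, hτ, hL⟩ => by
    have hL' := hL.filter he P hP
    by_cases hτP : P τ
    · simpa [List.filter_cons, hτP] using ⟨u, hlou, hσ, hτ, hL'⟩
    · simp only [List.filter_cons, hτP, decide_false]
      refine hL'.extend_left hlou hσ fun a => (hP τ hτP a).imp_right fun h => ?_
      simpa [← hτ, signVec, he] using h

end SignTable

section Elimination

open Polynomial

variable {ι : Type*}

/-- One elimination step for `p = g i₀`: the divisors `d` are `p'` and the other members of `g`,
and `r j` is a pseudo-remainder of `p` modulo `d j`. -/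
structure IsEliminationFamily (g : ι → ℝ[X]) (i₀ : ι) (nonzero : Option ι → Prop)
    (d r : Option ι → ℝ[X]) : Prop where
  derivative_ne_zero : derivative (g i₀) ≠ 0
  d_none : d none = derivative (g i₀)
  d_some : ∀ i, i ≠ i₀ → d (some i) = g i
  nonzero_iff : ∀ j, nonzero j ↔ d j ≠ 0
  sign_eq_of_eval_eq_zero : ∀ j, d j ≠ 0 → ∀ u : ℝ, (d j).eval u = 0 →
    SignType.sign ((g i₀).eval u) = SignType.sign ((r j).eval u)

def IsKept (nonzero : Option ι → Prop) (τ : Option ι ⊕ Option ι → SignType) : Prop :=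
  ∃ j, nonzero j ∧ τ (.inl j) = 0

open Classical in
noncomputable def keptSign (nonzero : Option ι → Prop) (τ : Option ι ⊕ Option ι → SignType) :
    SignType :=
  if h : IsKept nonzero τ then τ (.inr h.choose) else 0

variable {g : ι → ℝ[X]} {i₀ : ι} {nonzero : Option ι → Prop} {d r : Option ι → ℝ[X]}

theorem IsEliminationFamily.ne_zero (H : IsEliminationFamily g i₀ nonzero d r) : g i₀ ≠ 0 := by
  intro h
  exact H.derivative_ne_zero (by rw [h, derivative_zero])

theorem IsEliminationFamily.keptSign_eq (H : IsEliminationFamily g i₀ nonzero d r) {u : ℝ}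
    (hk : IsKept nonzero (signVec (Sum.elim d r) u)) :
    keptSign nonzero (signVec (Sum.elim d r) u) = SignType.sign ((g i₀).eval u) := by
  rw [keptSign, dif_pos hk]
  obtain ⟨hc, hz⟩ := hk.choose_spec
  exact (H.sign_eq_of_eval_eq_zero _ ((H.nonzero_iff _).1 hc) u (sign_eq_zero_iff.1 hz)).symm

variable [DecidableEq ι]

def withSign (i₀ : ι) (σ : Option ι → SignType) (v : SignType) : ι → SignType :=
  Function.update (fun i => σ (some i)) i₀ v

def rootSplit (i₀ : ι) (σ : Option ι → SignType) (lL rL : SignType) :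
    List ((ι → SignType) × (ι → SignType)) :=
  if lL = rL then [] else [(withSign i₀ σ lL, withSign i₀ σ 0)]

/-- The sign table of `g` built from a table of the divisors whose points are all roots of
nonzero divisors; `lp` and `ε` are the signs of `p` at the left end and at `+∞`. -/
noncomputable def insertRoots (i₀ : ι) (nonzero : Option ι → Prop) (ε : SignType) :
    SignType → List ((Option ι → SignType) × (Option ι ⊕ Option ι → SignType)) →
      (Option ι → SignType) → SignTable ι
  | lp, [], ρ =>
    (rootSplit i₀ ρ (signAfter lp (ρ none)) (signBefore ε (ρ none)),
      withSign i₀ ρ (signBefore ε (ρ none)))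
  | lp, (σ, τ) :: L, ρ =>
    (rootSplit i₀ σ (signAfter lp (σ none)) (signBefore (keptSign nonzero τ) (σ none)) ++
      (withSign i₀ σ (signBefore (keptSign nonzero τ) (σ none)),
        withSign i₀ (τ ∘ .inl) (keptSign nonzero τ)) ::
          (insertRoots i₀ nonzero ε (keptSign nonzero τ) L ρ).1,
      (insertRoots i₀ nonzero ε (keptSign nonzero τ) L ρ).2)

open Classical in
/-- At a point where no nonzero divisor vanishes the sign of `p` is unknown, but no divisor
changes sign there, so the point can be dropped. -/
noncomputable def eliminate (i₀ : ι) (nonzero : Option ι → Prop) (εbot εtop : SignType)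
    (T : SignTable (Option ι ⊕ Option ι)) : SignTable ι :=
  insertRoots i₀ nonzero εtop εbot
    ((T.1.map (Prod.map (· ∘ .inl) id)).filter fun c => IsKept nonzero c.2) (T.2 ∘ .inl)

namespace IsEliminationFamily

theorem signVec_eq_withSign (H : IsEliminationFamily g i₀ nonzero d r) (s : ℝ) :
    signVec g s = withSign i₀ (signVec d s) (SignType.sign ((g i₀).eval s)) := by
  funext i
  by_cases hi : i = i₀
  · subst hi
    simp [withSign, signVec]
  · simp [withSign, hi, signVec, H.d_some i hi]

theorem realizesFrom_rootSplit_nil (H : IsEliminationFamily g i₀ nonzero d r) {lo : EReal}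
    {lL rL : SignType} (hrun : IsSignRun (g i₀).eval lo ⊤ lL rL) {σ : Option ι → SignType}
    (hσ : ∀ s : ℝ, lo < s → signVec d s = σ) :
    RealizesFrom g g lo (rootSplit i₀ σ lL rL) (withSign i₀ σ rL) := by
  unfold rootSplit
  split_ifs with hLR
  · intro s hlos
    rw [H.signVec_eq_withSign, hσ s hlos, hrun.1 hLR s hlos (EReal.coe_lt_top s), hLR]
  · obtain ⟨v, hlov, -, hv, hleft, hright⟩ := hrun.2 hLR
    refine ⟨v, hlov, fun s hlos hsv => ?_, ?_, fun s hvs => ?_⟩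
    · rw [H.signVec_eq_withSign, hσ s hlos, hleft s hlos hsv]
    · rw [H.signVec_eq_withSign, hσ v hlov, show (g i₀).eval v = 0 from hv, sign_zero]
    · rw [H.signVec_eq_withSign, hσ s (hlov.trans hvs),
        hright s (EReal.coe_lt_coe_iff.1 hvs) (EReal.coe_lt_top s)]

theorem realizesFrom_rootSplit_cons (H : IsEliminationFamily g i₀ nonzero d r) {lo : EReal} {u : ℝ}
    (hlou : lo < u) {lL rL : SignType} (hrun : IsSignRun (g i₀).eval lo u lL rL)
    {σ : Option ι → SignType} (hσ : ∀ s : ℝ, lo < s → s < u → signVec d s = σ)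
    {τ ρ : ι → SignType} (hτ : signVec g u = τ) {L : List ((ι → SignType) × (ι → SignType))}
    (hL : RealizesFrom g g u L ρ) :
    RealizesFrom g g lo (rootSplit i₀ σ lL rL ++ (withSign i₀ σ rL, τ) :: L) ρ := by
  unfold rootSplit
  split_ifs with hLR
  · refine ⟨u, hlou, fun s hlos hsu => ?_, hτ, hL⟩
    rw [H.signVec_eq_withSign, hσ s hlos hsu,
      hrun.1 hLR s hlos (EReal.coe_lt_coe_iff.2 hsu), hLR]
  · obtain ⟨v, hlov, hvu, hv, hleft, hright⟩ := hrun.2 hLR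
    have hvu' := EReal.coe_lt_coe_iff.1 hvu
    refine ⟨v, hlov, fun s hlos hsv => ?_, ?_, u, hvu, fun s hvs hsu => ?_, hτ, hL⟩
    · rw [H.signVec_eq_withSign, hσ s hlos (hsv.trans hvu'), hleft s hlos hsv]
    · rw [H.signVec_eq_withSign, hσ v hlov hvu', show (g i₀).eval v = 0 from hv, sign_zero]
    · rw [H.signVec_eq_withSign, hσ s (hlov.trans hvs) hsu,
        hright s (EReal.coe_lt_coe_iff.1 hvs) (EReal.coe_lt_coe_iff.2 hsu)]

theorem realizesFrom_insertRoots (H : IsEliminationFamily g i₀ nonzero d r) :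
    ∀ {L : List ((Option ι → SignType) × (Option ι ⊕ Option ι → SignType))}
      {lo : EReal} {ρ : Option ι → SignType}, lo < ⊤ →
      RealizesFrom d (Sum.elim d r) lo L ρ → (∀ c ∈ L, IsKept nonzero c.2) →
        RealizesFrom g g lo (insertRoots i₀ nonzero (signAt (g i₀) ⊤) (signAt (g i₀) lo) L ρ).1
          (insertRoots i₀ nonzero (signAt (g i₀) ⊤) (signAt (g i₀) lo) L ρ).2
  | [], lo, ρ, hlo, h, _ => by
    have hder (s : ℝ) (hlos : lo < s) (_ : (s : EReal) < ⊤) :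
        SignType.sign ((derivative (g i₀)).eval s) = ρ none := by
      rw [← H.d_none]
      exact congrFun (h s hlos) none
    have hε' := ne_zero_of_forall_sign_eval_eq H.derivative_ne_zero hlo hder
    exact H.realizesFrom_rootSplit_nil (isSignRun_of_sign_derivative H.ne_zero hε' hlo hder) h
  | (σ, τ) :: L, lo, ρ, hlo, ⟨u, hlou, hσ, hτ, hL⟩, hkept => by
    have hder (s : ℝ) (hlos : lo < s) (hsu : (s : EReal) < u) :
        SignType.sign ((derivative (g i₀)).eval s) = σ none := by
      rw [← H.d_none]
      exact congrFun (hσ s hlos (EReal.coe_lt_coe_iff.1 hsu)) none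
    have hε' := ne_zero_of_forall_sign_eval_eq H.derivative_ne_zero hlou hder
    have hkτ : keptSign nonzero τ = signAt (g i₀) u := by
      rw [← hτ, H.keptSign_eq (hτ ▸ hkept _ List.mem_cons_self)]
      rfl
    have hpt : signVec g u = withSign i₀ (τ ∘ .inl) (signAt (g i₀) u) := by
      rw [H.signVec_eq_withSign, ← hτ]
      rfl
    have ih := H.realizesFrom_insertRoots (EReal.coe_lt_top u) hL
      fun c hc => hkept c (List.mem_cons_of_mem _ hc)
    rw [insertRoots, hkτ]
    exact H.realizesFrom_rootSplit_cons hlou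
      (isSignRun_of_sign_derivative H.ne_zero hε' hlou hder)
      (fun s hlos hsu => by rw [← hσ s hlos hsu]) hpt ih

theorem isSignTable_eliminate (H : IsEliminationFamily g i₀ nonzero d r)
    {T : SignTable (Option ι ⊕ Option ι)} (hT : IsSignTable (Sum.elim d r) T) :
    IsSignTable g (eliminate i₀ nonzero (signAt (g i₀) ⊥) (signAt (g i₀) ⊤) T) := by
  classical
  refine H.realizesFrom_insertRoots bot_lt_top ?_ (by simp)
  refine (hT.comp_left Sum.inl).filter (e := Sum.inl) (fun _ => rfl) _ fun τ hτ j => ?_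
  by_cases hj : nonzero j
  · exact Or.inr fun h => hτ ⟨j, hj, h⟩
  · exact Or.inl (not_not.1 (mt (H.nonzero_iff j).2 hj))

end IsEliminationFamily

end Elimination

section PseudoRemainder

open Polynomial

variable {A : Type*} [CommRing A]

theorem exists_C_leadingCoeff_pow_mul_eq [IsDomain A] (P : A[X]) {Q : A[X]} (hQ : Q ≠ 0) :
    ∃ (k : ℕ) (S R : A[X]), C (Q.leadingCoeff ^ k) * P = S * Q + R ∧ R.degree < Q.degree := by
  induction hd : P.degree using WellFoundedLT.induction generalizing P with
  | _ d ih =>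
  by_cases hlt : P.degree < Q.degree
  · exact ⟨0, 0, P, by simp, hlt⟩
  have hP : P ≠ 0 := by
    rintro rfl
    exact hlt (bot_lt_iff_ne_bot.2 (degree_ne_bot.2 hQ))
  have hle : Q.natDegree ≤ P.natDegree := natDegree_le_natDegree (not_lt.1 hlt)
  set e := P.natDegree - Q.natDegree
  have hdeg : (C P.leadingCoeff * X ^ e * Q).degree = P.degree := by
    rw [degree_mul, degree_mul, degree_C (leadingCoeff_ne_zero.2 hP), degree_X_pow,
      degree_eq_natDegree hQ, degree_eq_natDegree hP, zero_add, ← Nat.cast_add,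
      Nat.sub_add_cancel hle]
  have hlc : (C P.leadingCoeff * X ^ e * Q).leadingCoeff = P.leadingCoeff * Q.leadingCoeff := by
    simp
  have hlt' : (C Q.leadingCoeff * P - C P.leadingCoeff * X ^ e * Q).degree < d := by
    rw [← hd, ← degree_C_mul (leadingCoeff_ne_zero.2 hQ) (p := P)]
    refine degree_sub_lt_left ?_ ?_ ?_
    · rw [degree_C_mul (leadingCoeff_ne_zero.2 hQ), hdeg]
    · exact mul_ne_zero (C_ne_zero.2 (leadingCoeff_ne_zero.2 hQ)) hP
    · rw [hlc, leadingCoeff_mul, leadingCoeff_C, mul_comm]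
  obtain ⟨k, S, R, hSR, hR⟩ := ih _ hlt' _ rfl
  refine ⟨k + 1, S + C (Q.leadingCoeff ^ k * P.leadingCoeff) * X ^ e, R, ?_, hR⟩
  simp only [pow_succ, map_mul] at hSR ⊢
  linear_combination hSR

theorem exists_C_leadingCoeff_pow_two_mul_eq [IsDomain A] (P Q : A[X]) :
    ∃ (k : ℕ) (S R : A[X]), C (Q.leadingCoeff ^ (2 * k)) * P = S * Q + R ∧
      (R = 0 ∨ R.degree < Q.degree) := by
  rcases eq_or_ne Q 0 with rfl | hQ
  · exact ⟨1, 0, 0, by simp, Or.inl rfl⟩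
  obtain ⟨k, S, R, hSR, hR⟩ := exists_C_leadingCoeff_pow_mul_eq P hQ
  have hb : Q.leadingCoeff ^ k ≠ 0 := pow_ne_zero _ (leadingCoeff_ne_zero.2 hQ)
  refine ⟨k, C (Q.leadingCoeff ^ k) * S, C (Q.leadingCoeff ^ k) * R, ?_,
    Or.inr ((degree_C_mul hb).trans_lt hR)⟩
  have hsq : C (Q.leadingCoeff ^ (2 * k)) = C (Q.leadingCoeff ^ k) * C (Q.leadingCoeff ^ k) := by
    rw [← map_mul, ← pow_add, two_mul]
  rw [hsq, mul_assoc, hSR]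
  ring

theorem sign_eval_map_eq_of_eq_mul_add {φ : A →+* ℝ} {P Q S R : A[X]} {k : ℕ}
    (h : C (Q.leadingCoeff ^ (2 * k)) * P = S * Q + R) (hb : φ Q.leadingCoeff ≠ 0) {u : ℝ}
    (hu : (Q.map φ).eval u = 0) :
    SignType.sign ((P.map φ).eval u) = SignType.sign ((R.map φ).eval u) := by
  have := congrArg (fun T => (T.map φ).eval u) h
  simp only [Polynomial.map_mul, Polynomial.map_add, Polynomial.map_C, eval_mul, eval_add,
    eval_C, hu, mul_zero, zero_add] at this
  rw [← this, sign_mul, map_pow, pow_mul, sign_pos (pow_pos (sq_pos_of_ne_zero hb) k), one_mul]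

end PseudoRemainder

section DegreeMultiset

theorem Multiset.isDershowitzMannaLT_sum_singleton {α ι κ : Type*} [Preorder α] [Fintype ι]
    [Fintype κ] {f : ι → α} {g : κ → α} (S : Finset ι) (hS : S.Nonempty)
    (e : {i // i ∉ S} ↪ κ) (he : ∀ i, g (e i) = f i)
    (hlt : ∀ k, k ∉ Set.range e → ∃ i ∈ S, g k < f i) :
    Multiset.IsDershowitzMannaLT (∑ k, {g k}) (∑ i, {f i}) := by
  classical
  refine ⟨∑ i ∈ Sᶜ, {f i}, ∑ k ∈ (Finset.univ.map e)ᶜ, {g k}, ∑ i ∈ S, {f i}, ?_, ?_, ?_, ?_⟩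
  · obtain ⟨i, hi⟩ := hS
    simpa [Multiset.empty_eq_zero, Finset.sum_eq_zero_iff] using ⟨i, hi⟩
  · rw [← Finset.sum_add_sum_compl (Finset.univ.map e), Finset.sum_map]
    simp only [he]
    rw [Finset.sum_subtype (p := (· ∉ S)) _ (fun i => Finset.mem_compl)]
  · exact (Finset.sum_compl_add_sum S _).symm
  · intro y hy
    obtain ⟨k, hk, rfl⟩ : ∃ k ∈ (Finset.univ.map e)ᶜ, y = g k := by simpa using hy
    obtain ⟨i, hi, hlt⟩ := hlt k (by simpa using hk)
    exact ⟨f i, Multiset.mem_sum.2 ⟨i, hi, Multiset.mem_singleton_self _⟩, hlt⟩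

end DegreeMultiset

section Parametric

open Polynomial

variable {n : ℕ}

def HasSignTableOn {ι : Type*} (F : ι → (MvPolynomial (Fin n) ℝ)[X]) (R : Set (Fin n → ℝ)) :
    Prop :=
  ∃ T : (Fin n → ℝ) → SignTable ι, IsSemialgebraicSimpleFunc T ∧
    ∀ x ∈ R, IsSignTable (fun i => (F i).map (MvPolynomial.eval x)) (T x)

namespace HasSignTableOn

variable {ι : Type*} {F : ι → (MvPolynomial (Fin n) ℝ)[X]}

theorem mono {R R' : Set (Fin n → ℝ)} (h : HasSignTableOn F R) (hR : R' ⊆ R) :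
    HasSignTableOn F R' :=
  let ⟨T, hT, hreal⟩ := h
  ⟨T, hT, fun x hx => hreal x (hR hx)⟩

theorem univ_of_forall_preimage {κ : Type*} {pat : (Fin n → ℝ) → κ}
    (hpat : IsSemialgebraicSimpleFunc pat) (h : ∀ v, HasSignTableOn F (pat ⁻¹' {v})) :
    HasSignTableOn F univ := by
  choose T hT hreal using h
  exact ⟨fun x => T (pat x) x, hpat.bind hT, fun x _ => hreal _ x rfl⟩

theorem univ_of_natDegree_eq_zero [Finite ι] (h : ∀ i, (F i).natDegree = 0) :
    HasSignTableOn F univ := by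
  refine ⟨(fun σ => ([], σ)) ∘ fun x i => SignType.sign (MvPolynomial.eval x ((F i).coeff 0)),
    (IsSemialgebraicSimpleFunc.pi fun i => isSemialgebraicSimpleFunc_sign_eval _).comp _,
    fun x _ s _ => ?_⟩
  funext i
  rw [signVec, eq_C_of_natDegree_eq_zero (h i)]
  simp

end HasSignTableOn

theorem Polynomial.map_eraseLead_of_map_leadingCoeff_eq_zero {A B : Type*} [Semiring A]
    [Semiring B] {φ : A →+* B} {P : A[X]} (h : φ P.leadingCoeff = 0) :
    P.eraseLead.map φ = P.map φ := by
  calc P.eraseLead.map φ = (P.eraseLead + C P.leadingCoeff * X ^ P.natDegree).map φ := by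
        rw [Polynomial.map_add, Polynomial.map_mul, Polynomial.map_C, h, C_0, zero_mul, add_zero]
    _ = P.map φ := by rw [P.eraseLead_add_C_mul_X_pow]

theorem Polynomial.map_ne_zero_of_map_leadingCoeff_ne_zero {A B : Type*} [Semiring A]
    [Semiring B] {φ : A →+* B} {P : A[X]} (h : φ P.leadingCoeff ≠ 0) : P.map φ ≠ 0 := fun h0 =>
  h (by rw [← leadingCoeff_map_of_leadingCoeff_ne_zero φ h, h0, leadingCoeff_zero])

variable {ι : Type*} {F : ι → (MvPolynomial (Fin n) ℝ)[X]}

theorem hasSignTableOn_of_eraseLead (v : ι → SignType)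
    (h : HasSignTableOn (fun i => if v i = 0 then (F i).eraseLead else F i) univ) :
    HasSignTableOn F {x | ∀ i, SignType.sign (MvPolynomial.eval x (F i).leadingCoeff) = v i} := by
  obtain ⟨T, hT, hreal⟩ := h
  refine ⟨T, hT, fun x hx => ?_⟩
  convert hreal x trivial using 2 with i
  dsimp only
  split_ifs with hvi
  · rw [map_eraseLead_of_map_leadingCoeff_eq_zero (sign_eq_zero_iff.1 ((hx i).trans hvi))]
  · rfl

theorem isDershowitzMannaLT_eraseLead [Fintype ι] {v : ι → SignType} (h : ∃ i, v i = 0 ∧ F i ≠ 0) :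
    Multiset.IsDershowitzMannaLT
      (∑ i, {(if v i = 0 then (F i).eraseLead else F i).degree}) (∑ i, {(F i).degree}) := by
  classical
  obtain ⟨i₁, hi₁⟩ := h
  refine Multiset.isDershowitzMannaLT_sum_singleton (Finset.univ.filter fun i => v i = 0 ∧ F i ≠ 0)
    ⟨i₁, by simpa using hi₁⟩ (Function.Embedding.subtype _) (fun ⟨i, hi⟩ => ?_) fun k hk => ?_
  · simp only [Finset.mem_filter, Finset.mem_univ, true_and, not_and, not_not] at hi
    by_cases hvi : v i = 0
    · simp [hvi, hi hvi]
    · simp [hvi]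
  · have hkS : v k = 0 ∧ F k ≠ 0 := by
      by_contra hkS
      exact hk ⟨⟨k, by simpa using hkS⟩, rfl⟩
    exact ⟨k, by simpa using hkS, by simpa [hkS.1] using degree_eraseLead_lt hkS.2⟩

end Parametric

section ParametricElimination

open Polynomial

variable {n : ℕ}

section Divisors

variable {ι : Type*} [DecidableEq ι] {F : ι → (MvPolynomial (Fin n) ℝ)[X]} {i₀ : ι}

noncomputable def eliminationDivisors (F : ι → (MvPolynomial (Fin n) ℝ)[X]) (i₀ : ι) :
    Option ι → (MvPolynomial (Fin n) ℝ)[X]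
  | none => derivative (F i₀)
  | some i => if i = i₀ then 0 else F i

theorem eval_leadingCoeff_eliminationDivisors_ne_zero (hd : (F i₀).natDegree ≠ 0)
    {x : Fin n → ℝ} (hx : ∀ i, F i ≠ 0 → MvPolynomial.eval x (F i).leadingCoeff ≠ 0) :
    ∀ j, eliminationDivisors F i₀ j ≠ 0 →
      MvPolynomial.eval x (eliminationDivisors F i₀ j).leadingCoeff ≠ 0
  | none, _ => by
    have hP : F i₀ ≠ 0 := ne_zero_of_natDegree_gt (Nat.pos_of_ne_zero hd)
    simpa [eliminationDivisors, hd] using hx i₀ hP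
  | some i, hi => by
    by_cases h : i = i₀
    · simp [eliminationDivisors, h] at hi
    · simp only [eliminationDivisors, if_neg h] at hi ⊢
      exact hx i hi

theorem isEliminationFamily_map (hd : (F i₀).natDegree ≠ 0) {k : Option ι → ℕ}
    {S R : Option ι → (MvPolynomial (Fin n) ℝ)[X]}
    (hSR : ∀ j, C ((eliminationDivisors F i₀ j).leadingCoeff ^ (2 * k j)) * F i₀ =
      S j * eliminationDivisors F i₀ j + R j)
    {x : Fin n → ℝ} (hx : ∀ i, F i ≠ 0 → MvPolynomial.eval x (F i).leadingCoeff ≠ 0) :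
    IsEliminationFamily (fun i => (F i).map (MvPolynomial.eval x)) i₀
      (fun j => eliminationDivisors F i₀ j ≠ 0)
      (fun j => (eliminationDivisors F i₀ j).map (MvPolynomial.eval x))
      (fun j => (R j).map (MvPolynomial.eval x)) := by
  have hlc := eval_leadingCoeff_eliminationDivisors_ne_zero hd hx
  have hP : F i₀ ≠ 0 := ne_zero_of_natDegree_gt (Nat.pos_of_ne_zero hd)
  have hne (j) (hj : (eliminationDivisors F i₀ j).map (MvPolynomial.eval x) ≠ 0) :
      eliminationDivisors F i₀ j ≠ 0 := fun h0 => hj (by rw [h0, Polynomial.map_zero])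
  exact
  { derivative_ne_zero := derivative_ne_zero.2
      (by rwa [natDegree_map_of_leadingCoeff_ne_zero _ (hx i₀ hP)])
    d_none := (derivative_map _ _).symm
    d_some := fun i hi => by simp [eliminationDivisors, hi]
    nonzero_iff := fun j => ⟨fun h => map_ne_zero_of_map_leadingCoeff_ne_zero (hlc j h), hne j⟩
    sign_eq_of_eval_eq_zero := fun j hj u hu =>
      sign_eval_map_eq_of_eq_mul_add (hSR j) (hlc j (hne j hj)) hu }

theorem isDershowitzMannaLT_eliminationDivisors [Fintype ι]
    (hmax : ∀ i, (F i).degree ≤ (F i₀).degree) (hd : (F i₀).natDegree ≠ 0)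
    {R : Option ι → (MvPolynomial (Fin n) ℝ)[X]}
    (hR : ∀ j, R j = 0 ∨ (R j).degree < (eliminationDivisors F i₀ j).degree) :
    Multiset.IsDershowitzMannaLT (∑ k, {(Sum.elim (eliminationDivisors F i₀) R k).degree})
      (∑ i, {(F i).degree}) := by
  have hP : F i₀ ≠ 0 := ne_zero_of_natDegree_gt (Nat.pos_of_ne_zero hd)
  have hbot : ⊥ < (F i₀).degree := bot_lt_iff_ne_bot.2 (degree_ne_bot.2 hP)
  have hD : ∀ j, (eliminationDivisors F i₀ j).degree ≤ (F i₀).degree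
    | none => (degree_derivative_lt hP).le
    | some i => by
      change (if i = i₀ then 0 else F i).degree ≤ _
      split_ifs
      · exact degree_zero.trans_le bot_le
      · exact hmax i
  refine Multiset.isDershowitzMannaLT_sum_singleton {i₀} (Finset.singleton_nonempty _)
    ⟨fun i => .inl (some i.1), fun a b h => Subtype.ext (by simpa using h)⟩
    (fun ⟨i, hi⟩ => ?_) fun k hk => ⟨i₀, Finset.mem_singleton_self _, ?_⟩
  · change (if i = i₀ then 0 else F i).degree = (F i).degree
    rw [if_neg (by simpa using hi)]
  · rcases k with (_ | i) | j
    · exact degree_derivative_lt hP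
    · obtain rfl : i = i₀ := by
        by_contra h
        exact hk ⟨⟨i, by simpa using h⟩, rfl⟩
      simpa [eliminationDivisors] using hbot
    · rcases hR j with h | h
      · simpa [h] using hbot
      · exact h.trans_le (hD j)

end Divisors

variable {ι : Type} {F : ι → (MvPolynomial (Fin n) ℝ)[X]} {i₀ : ι}

theorem hasSignTableOn_of_eliminate [Fintype ι] (hmax : ∀ i, (F i).degree ≤ (F i₀).degree)
    (hd : (F i₀).natDegree ≠ 0)
    (ih : ∀ (κ : Type) [Fintype κ] (G : κ → (MvPolynomial (Fin n) ℝ)[X]),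
      Multiset.IsDershowitzMannaLT (∑ k, {(G k).degree}) (∑ i, {(F i).degree}) →
        HasSignTableOn G univ) :
    HasSignTableOn F {x | ∀ i, F i ≠ 0 → MvPolynomial.eval x (F i).leadingCoeff ≠ 0} := by
  classical
  choose k S R hSR hR using fun j =>
    exists_C_leadingCoeff_pow_two_mul_eq (F i₀) (eliminationDivisors F i₀ j)
  obtain ⟨T, hT, hreal⟩ := ih _ _ (isDershowitzMannaLT_eliminationDivisors hmax hd hR)
  let nonzero := fun j => eliminationDivisors F i₀ j ≠ 0
  refine ⟨fun x => eliminate i₀ nonzero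
      (SignType.sign (MvPolynomial.eval x (F i₀).leadingCoeff) * (-1) ^ (F i₀).natDegree)
      (SignType.sign (MvPolynomial.eval x (F i₀).leadingCoeff)) (T x),
    ((isSemialgebraicSimpleFunc_sign_eval _).prodMk hT).comp
      fun q => eliminate i₀ nonzero (q.1 * (-1) ^ (F i₀).natDegree) q.1 q.2,
    fun x hx => ?_⟩
  have hP : F i₀ ≠ 0 := ne_zero_of_natDegree_gt (Nat.pos_of_ne_zero hd)
  have hx₀ := hx i₀ hP
  have hG := hreal x trivial
  rw [show (fun k => (Sum.elim (eliminationDivisors F i₀) R k).map (MvPolynomial.eval x)) =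
      Sum.elim (fun j => (eliminationDivisors F i₀ j).map (MvPolynomial.eval x))
        (fun j => (R j).map (MvPolynomial.eval x)) by ext (_ | _) <;> rfl] at hG
  convert (isEliminationFamily_map hd hSR hx).isSignTable_eliminate hG using 2 <;>
    simp [signAt, leadingCoeff_map_of_leadingCoeff_ne_zero _ hx₀,
      natDegree_map_of_leadingCoeff_ne_zero _ hx₀]

theorem hasSignTableOn_univ_of_lt [Fintype ι] (F : ι → (MvPolynomial (Fin n) ℝ)[X])
    (ih : ∀ (κ : Type) [Fintype κ] (G : κ → (MvPolynomial (Fin n) ℝ)[X]),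
      Multiset.IsDershowitzMannaLT (∑ k, {(G k).degree}) (∑ i, {(F i).degree}) →
        HasSignTableOn G univ) :
    HasSignTableOn F univ := by
  by_cases hconst : ∀ i, (F i).natDegree = 0
  · exact HasSignTableOn.univ_of_natDegree_eq_zero hconst
  obtain ⟨i₁, hi₁⟩ := not_forall.1 hconst
  obtain ⟨i₀, -, hmax⟩ := Finset.exists_max_image Finset.univ (fun i => (F i).degree)
    ⟨i₁, Finset.mem_univ _⟩
  replace hmax i := hmax i (Finset.mem_univ i)
  have hd : (F i₀).natDegree ≠ 0 :=
    fun h => hi₁ (Nat.eq_zero_of_le_zero (h ▸ natDegree_le_natDegree (hmax i₁)))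
  refine HasSignTableOn.univ_of_forall_preimage (IsSemialgebraicSimpleFunc.pi fun i =>
    isSemialgebraicSimpleFunc_sign_eval (F i).leadingCoeff) fun v => ?_
  by_cases htr : ∃ i, v i = 0 ∧ F i ≠ 0
  · refine (hasSignTableOn_of_eraseLead v (ih _ _ (isDershowitzMannaLT_eraseLead htr))).mono ?_
    intro x hx
    simpa [funext_iff] using hx
  · refine (hasSignTableOn_of_eliminate hmax hd ih).mono fun x hx i hi => ?_
    have hv : SignType.sign (MvPolynomial.eval x (F i).leadingCoeff) = v i := congrFun hx i
    rw [← sign_ne_zero, hv]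
    exact fun h => htr ⟨i, h, hi⟩

theorem hasSignTableOn_univ [Fintype ι] (F : ι → (MvPolynomial (Fin n) ℝ)[X]) :
    HasSignTableOn F univ := by
  suffices h : ∀ M : Multiset (WithBot ℕ), ∀ (ι : Type) [Fintype ι]
      (F : ι → (MvPolynomial (Fin n) ℝ)[X]), ∑ i, {(F i).degree} = M → HasSignTableOn F univ from
    h _ ι F rfl
  intro M
  induction M using
    WellFounded.induction (Multiset.wellFounded_isDershowitzMannaLT (α := WithBot ℕ)) with
  | _ M ih =>
    rintro ι _ F rfl
    exact hasSignTableOn_univ_of_lt F fun κ _ G hG => ih _ hG κ G rfl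

end ParametricElimination

section Projection

open Polynomial

variable {n : ℕ}

noncomputable def MvPolynomial.toPolynomialLast {R : Type*} [CommSemiring R]
    (p : MvPolynomial (Fin (n + 1)) R) : (MvPolynomial (Fin n) R)[X] :=
  MvPolynomial.finSuccEquiv R n (MvPolynomial.rename (finRotate (n + 1)) p)

theorem MvPolynomial.eval_snoc {R : Type*} [CommSemiring R] (p : MvPolynomial (Fin (n + 1)) R)
    (x : Fin n → R) (t : R) :
    MvPolynomial.eval (Fin.snoc x t) p = (p.toPolynomialLast.map (MvPolynomial.eval x)).eval t := by
  rw [toPolynomialLast, ← MvPolynomial.eval_eq_eval_mv_eval', MvPolynomial.eval_rename]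
  congr 2
  funext v
  refine Fin.lastCases ?_ (fun i => ?_) v
  · simp [Fin.last_add_one]
  · simp [Fin.coeSucc_eq_succ]

theorem Fin.mem_image_comp_castSucc_iff {α : Type*} {A : Set (Fin (n + 1) → α)}
    {y : Fin n → α} : y ∈ (fun x : Fin (n + 1) → α => x ∘ Fin.castSucc) '' A ↔
      ∃ t, Fin.snoc y t ∈ A := by
  constructor
  · rintro ⟨x, hx, rfl⟩
    refine ⟨x (Fin.last n), ?_⟩
    change Fin.snoc (Fin.init x) (x (Fin.last n)) ∈ A
    rwa [Fin.snoc_init_self]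
  · rintro ⟨t, ht⟩
    exact ⟨_, ht, funext fun i => by simp⟩

theorem ite_iff_sign_eq (b : Bool) (v : ℝ) :
    (if b then v = 0 else 0 < v) ↔ SignType.sign v = if b then 0 else 1 := by
  cases b <;> simp [sign_eq_one_iff]

end Projection

/-- Tarski–Seidenberg theorem: the image of a semialgebraic subset of `ℝ^{n+1}`
under the projection onto the first `n` coordinates is a semialgebraic subset
of `ℝⁿ`. -/
theorem tarski_seidenberg
    (n : ℕ) (A : Set (Fin (n + 1) → ℝ)) (hA : IsSemialgebraic A) :
    IsSemialgebraic ((fun x : Fin (n + 1) → ℝ => x ∘ Fin.castSucc) '' A) := by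
  obtain ⟨p, q, f, c, rfl⟩ := hA
  obtain ⟨T, hT, hreal⟩ :=
    hasSignTableOn_univ fun ij : Fin p × Fin q => (f ij.1 ij.2).toPolynomialLast
  convert hT.preimage {T | ∃ σ ∈ T.vectors, ∃ i, ∀ j, σ (i, j) = if c i j then 0 else 1} using 1
  ext x
  simp only [Fin.mem_image_comp_castSucc_iff, mem_iUnion, mem_iInter, mem_ofPred_eq,
    mem_preimage, MvPolynomial.eval_snoc, ite_iff_sign_eq]
  simp_rw [← (hreal x trivial).exists_signVec_eq_iff]
  exact ⟨fun ⟨t, i, h⟩ => ⟨_, ⟨t, rfl⟩, i, h⟩, fun ⟨_, ⟨t, rfl⟩, i, h⟩ => ⟨t, i, h⟩⟩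
end
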